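/- arXiv:2504.02289 — 7 statements merged into one kernel-verified Lean document; each statement's English description precedes it below -/
import Mathlib

section
/- Let H be a hypergraph and 𝒫 an arbitrary partition of V. Then there exists a feasible partition 𝒫' of V (each part inducing a connected subhypergraph) with |𝒫'| ≥ |𝒫| and δ(𝒫') = δ(𝒫). Consequently, the admissible set of the family of feasible partitions equals the partition polyhedron {x ≥ 0 : x(δ(𝒫)) ≥ |𝒫| - 1 for all partitions 𝒫 of V}. -/
open Finset
open scoped Classical

noncomputable section

variable {V E : Type*}

/-- The set of hyperedges meeting at least two parts of the partition `P` (the cut `δ(P)`). -/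
def hcut [Fintype V] [DecidableEq V] [Fintype E] (edge : E → Finset V)
    (P : Finpartition (univ : Finset V)) : Finset E :=
  univ.filter fun e => ∃ p ∈ P.parts, ∃ q ∈ P.parts,
    p ≠ q ∧ (edge e ∩ p).Nonempty ∧ (edge e ∩ q).Nonempty

/-- The hyperedges entirely contained in the vertex set `X`. -/
def edgesIn [DecidableEq V] [Fintype E] (edge : E → Finset V) (X : Finset V) : Finset E :=
  univ.filter fun e => edge e ⊆ X

/-- The strength `S(H)`. -/
def strength [Fintype V] [DecidableEq V] [Fintype E] (edge : E → Finset V) : ℝ :=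
  sInf { r : ℝ | ∃ P : Finpartition (univ : Finset V), 2 ≤ P.parts.card ∧
    r = ((hcut edge P).card : ℝ) / ((P.parts.card : ℝ) - 1) }

/-- The weighted strength `S_σ(H)`. -/
def strengthW [Fintype V] [DecidableEq V] [Fintype E] (σ : E → ℝ) (edge : E → Finset V) : ℝ :=
  sInf { r : ℝ | ∃ P : Finpartition (univ : Finset V), 2 ≤ P.parts.card ∧
    r = (∑ e ∈ hcut edge P, σ e) / ((P.parts.card : ℝ) - 1) }

/-- The fractional arboricity `D(H)`. -/
def arboricity [Fintype V] [DecidableEq V] [Fintype E] (edge : E → Finset V) : ℝ :=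
  sSup { r : ℝ | ∃ X : Finset V, 2 ≤ X.card ∧
    r = ((edgesIn edge X).card : ℝ) / ((X.card : ℝ) - 1) }

/-- Connectivity of the subhypergraph induced by the vertex set `W`
(only hyperedges contained in `W` are used). -/
def ConnectedIn (edge : E → Finset V) (W : Finset V) : Prop :=
  ∀ X ⊆ W, X.Nonempty → X ≠ W →
    ∃ e, edge e ⊆ W ∧ (edge e ∩ X).Nonempty ∧ ((edge e ∩ W) \ X).Nonempty

/-- Connectivity of the trace hypergraph on the vertex set `W`
(each hyperedge is replaced by its intersection with `W`, as in vertex deletion). -/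
def ConnectedOn (edge : E → Finset V) (W : Finset V) : Prop :=
  ∀ X ⊆ W, X.Nonempty → X ≠ W →
    ∃ e, ((edge e ∩ W) ∩ X).Nonempty ∧ ((edge e ∩ W) \ X).Nonempty

/-- A hypergraph is connected if every nonempty proper vertex subset is crossed by a hyperedge. -/
def HConnected [Fintype V] (edge : E → Finset V) : Prop :=
  ConnectedIn edge univ

/-- `H` is partition-connected if `|δ(P)| ≥ |P| - 1` for every partition `P` of `V`. -/
def PartitionConnected [Fintype V] [DecidableEq V] [Fintype E] (edge : E → Finset V) : Prop :=
  ∀ P : Finpartition (univ : Finset V), P.parts.card - 1 ≤ (hcut edge P).card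

/-- A partition is feasible if each part induces a connected subhypergraph. -/
def Feasible [Fintype V] [DecidableEq V] (edge : E → Finset V) (P : Finpartition (univ : Finset V)) : Prop :=
  ∀ p ∈ P.parts, ConnectedIn edge p

/-- The edges of the shrunk hypergraph `H_P`: vertices are the parts of `P`, and a hyperedge
becomes the set of parts it meets. -/
def shrunkEdge [Fintype V] [DecidableEq V] (edge : E → Finset V)
    (P : Finpartition (univ : Finset V)) (e : E) : Finset {p : Finset V // p ∈ P.parts} :=
  univ.filter fun p => (edge e ∩ p.1).Nonempty

/-- The shrunk hypergraph `H_P` is vertex-biconnected: it is connected and no single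
vertex deletion disconnects it. -/
def ShrunkBiconnected [Fintype V] [DecidableEq V] [Fintype E] (edge : E → Finset V)
    (P : Finpartition (univ : Finset V)) : Prop :=
  ConnectedIn (shrunkEdge edge P) univ ∧
  ∀ p : {p : Finset V // p ∈ P.parts}, ConnectedOn (shrunkEdge edge P) (univ \ {p})

/-- `F` is a hypertree: a hyperforest of size `|V| - 1`. -/
def IsHypertree [Fintype V] [DecidableEq V] (edge : E → Finset V) (F : Finset E) : Prop :=
  F.card = Fintype.card V - 1 ∧
  ∀ X : Finset V, X.Nonempty → (F.filter fun e => edge e ⊆ X).card ≤ X.card - 1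

/-- `m` is the multiplicity vector of a multiset of hyperedges forming a hypertree on `V`. -/
def IsMultiTree [Fintype V] [DecidableEq V] [Fintype E] (edge : E → Finset V) (m : E → ℕ) : Prop :=
  (∑ e, m e) = Fintype.card V - 1 ∧
  ∀ X : Finset V, X.Nonempty → (∑ e ∈ edgesIn edge X, m e) ≤ X.card - 1

/-- The multi-tree family `Ω(H)` as a set of usage vectors in `ℝ^E`. -/
def OmegaSet [Fintype V] [DecidableEq V] [Fintype E] (edge : E → Finset V) : Set (E → ℝ) :=
  { x | ∃ m : E → ℕ, IsMultiTree edge m ∧ x = fun e => (m e : ℝ) }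

/-- The hypertree family `Γ(H)` as a set of (indicator) usage vectors in `ℝ^E`. -/
def GammaSet [Fintype V] [DecidableEq V] [Fintype E] (edge : E → Finset V) : Set (E → ℝ) :=
  { x | ∃ F : Finset E, IsHypertree edge F ∧ x = fun e => if e ∈ F then (1 : ℝ) else 0 }

/-- The admissible set of a family of usage vectors. -/
def AdmSet [Fintype E] (G : Set (E → ℝ)) : Set (E → ℝ) :=
  { ρ | (∀ e, 0 ≤ ρ e) ∧ ∀ x ∈ G, 1 ≤ ∑ e, x e * ρ e }

/-- The weighted 1-modulus of a family of usage vectors. -/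
def Mod1 [Fintype E] (σ : E → ℝ) (G : Set (E → ℝ)) : ℝ :=
  sInf { t : ℝ | ∃ ρ ∈ AdmSet G, t = ∑ e, σ e * ρ e }

/-- `w` is an extreme point of `S`: it lies in `S` and is not the midpoint of two
distinct points of `S`. -/
def IsExtremePt [Fintype E] (S : Set (E → ℝ)) (w : E → ℝ) : Prop :=
  w ∈ S ∧ ∀ y ∈ S, ∀ z ∈ S, (∀ e, w e = (y e + z e) / 2) → y = z

/-- The rank function of the hypergraphic matroid `M(H)` (Frank et al.):
`r(F) = min { |V| - |P| + |δ_F(P)| }` over partitions `P` of `V`. -/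
def hrank [Fintype V] [DecidableEq V] [Fintype E] [DecidableEq E]
    (edge : E → Finset V) (F : Finset E) : ℕ :=
  sInf { n : ℕ | ∃ P : Finpartition (univ : Finset V),
    n = Fintype.card V - P.parts.card + (hcut edge P ∩ F).card }

/-- The (unweighted) strength of the hypergraphic matroid `M(H)`. -/
def mstrength [Fintype V] [DecidableEq V] [Fintype E] [DecidableEq E]
    (edge : E → Finset V) : ℝ :=
  sInf { r : ℝ | ∃ X : Finset E, hrank edge (univ \ X) < hrank edge univ ∧
    r = (X.card : ℝ) / ((hrank edge univ : ℝ) - (hrank edge (univ \ X) : ℝ)) }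

/-- The fractional arboricity of the hypergraphic matroid `M(H)`. -/
def marboricity [Fintype V] [DecidableEq V] [Fintype E] [DecidableEq E]
    (edge : E → Finset V) : ℝ :=
  sSup { r : ℝ | ∃ X : Finset E, 0 < hrank edge X ∧ r = (X.card : ℝ) / (hrank edge X : ℝ) }

end

/-!
Take a finest refinement `P'` of `P` with the same cut `δ(P') = δ(P)`. If a part `p` of `P'`
were disconnected, some nonempty `X ⊊ p` would be crossed by no hyperedge contained in `p`.
Splitting `p` into `X` and `p \ X` then keeps the cut: a hyperedge meeting both is not
contained in `p`, so it already meets another part. This contradicts the choice of `P'`.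
Refining only adds parts, so the constraint of any partition follows from that of `P'`.
-/
namespace Finpartition

variable {α : Type*} [GeneralizedBooleanAlgebra α] [DecidableEq α] {a b : α}

/-- If `b` lies inside a part `d` of `P`, this splits `d` into `b` and `d \ b`. -/
def splitOff (P : Finpartition a) (hb : b ≠ ⊥) (hba : b ≤ a) : Finpartition a :=
  (P.avoid b).extend hb disjoint_sdiff_self_left (sdiff_sup_cancel hba)

theorem mem_splitOff {P : Finpartition a} {hb : b ≠ ⊥} {hba : b ≤ a} {c : α} :
    c ∈ (P.splitOff hb hba).parts ↔ c = b ∨ ∃ d ∈ P.parts, ¬d ≤ b ∧ d \ b = c := by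
  simp [splitOff]

theorem splitOff_le {P : Finpartition a} {hb : b ≠ ⊥} {hba : b ≤ a} {d : α} (hd : d ∈ P.parts)
    (hbd : b ≤ d) : P.splitOff hb hba ≤ P := by
  intro c hc
  obtain rfl | ⟨d', hd', -, rfl⟩ := mem_splitOff.1 hc
  · exact ⟨d, hd, hbd⟩
  · exact ⟨d', hd', sdiff_le⟩

theorem splitOff_ne {P : Finpartition a} {hb : b ≠ ⊥} {hba : b ≤ a} {d : α} (hd : d ∈ P.parts)
    (hbd : b < d) : P.splitOff hb hba ≠ P := by
  intro h
  have hbP : b ∈ P.parts := h ▸ mem_splitOff.2 (Or.inl rfl)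
  exact hbd.ne (P.disjoint.eq_of_le hbP hd (P.ne_bot hbP) hbd.le)

end Finpartition

theorem exists_separated_of_not_connectedIn {V E : Type*} {edge : E → Finset V} {W : Finset V}
    (h : ¬ConnectedIn edge W) :
    ∃ X ⊆ W, X.Nonempty ∧ X ≠ W ∧ ∀ e, edge e ⊆ W → ¬Disjoint (edge e) X → edge e ⊆ X := by
  simp only [ConnectedIn, not_forall, not_exists, not_and, exists_prop] at h
  obtain ⟨X, hXW, hX, hXne, hsep⟩ := h
  refine ⟨X, hXW, hX, hXne, fun e heW heX v hv => ?_⟩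
  by_contra hvX
  exact hsep e heW (not_disjoint_iff_nonempty_inter.1 heX)
    ⟨v, mem_sdiff.2 ⟨mem_inter.2 ⟨hv, heW hv⟩, hvX⟩⟩

section

variable {V E : Type*} [Fintype V] [DecidableEq V] [Fintype E] {edge : E → Finset V}
  {P Q : Finpartition (univ : Finset V)} {e : E}

theorem notMem_hcut_iff :
    e ∉ hcut edge P ↔ ∀ p ∈ P.parts, (edge e ∩ p).Nonempty → edge e ⊆ p := by
  simp only [hcut, mem_filter, mem_univ, true_and, not_exists, not_and]
  constructor
  · intro h p hp hep v hv
    obtain ⟨q, hq, hvq⟩ := P.exists_mem (mem_univ v)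
    by_contra hvp
    exact h p hp q hq (fun hpq => hvp (hpq ▸ hvq)) hep ⟨v, mem_inter.2 ⟨hv, hvq⟩⟩
  · rintro h p hp q hq hpq hep ⟨v, hv⟩
    rw [mem_inter] at hv
    exact hpq (P.eq_of_mem_parts hp hq (h p hp hep hv.1) hv.2)

theorem hcut_subset_of_le (hQP : Q ≤ P) : hcut edge P ⊆ hcut edge Q := by
  intro e
  contrapose
  simp only [notMem_hcut_iff]
  rintro h p hp ⟨v, hv⟩
  rw [mem_inter] at hv
  obtain ⟨r, hr, hvr⟩ := Q.exists_mem (mem_univ v)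
  obtain ⟨p', hp', hrp'⟩ := hQP hr
  have hp'p : p' = p := P.eq_of_mem_parts hp' hp (hrp' hvr) hv.2
  exact (h r hr ⟨v, mem_inter.2 ⟨hv.1, hvr⟩⟩).trans (hp'p ▸ hrp')

theorem hcut_splitOff {p X : Finset V} (hp : p ∈ P.parts) (hXp : X ⊆ p) (hX : X ≠ ∅)
    (hsep : ∀ e, edge e ⊆ p → ¬Disjoint (edge e) X → edge e ⊆ X) :
    hcut edge (P.splitOff hX (subset_univ X)) = hcut edge P := by
  refine (Subset.antisymm ?_ (hcut_subset_of_le (Finpartition.splitOff_le hp hXp)))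
  intro e
  contrapose
  simp only [notMem_hcut_iff]
  intro h
  have hmeetX : ¬Disjoint (edge e) X → edge e ⊆ X := fun heX =>
    hsep e (h p hp ((not_disjoint_iff_nonempty_inter.1 heX).mono (inter_subset_inter_left hXp))) heX
  intro r hr her
  obtain rfl | ⟨d, hd, -, rfl⟩ := Finpartition.mem_splitOff.1 hr
  · exact hmeetX (not_disjoint_iff_nonempty_inter.2 her)
  · have hed : edge e ⊆ d := h d hd (her.mono (inter_subset_inter_left sdiff_subset))
    refine subset_sdiff.2 ⟨hed, ?_⟩
    by_contra heX
    obtain ⟨v, hv⟩ := her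
    rw [mem_inter, mem_sdiff] at hv
    exact hv.2.2 (hmeetX heX hv.1)

theorem exists_feasible_le_hcut_eq (edge : E → Finset V) (P : Finpartition (univ : Finset V)) :
    ∃ P' ≤ P, Feasible edge P' ∧ hcut edge P' = hcut edge P := by
  obtain ⟨Q, ⟨hQP, hQcut⟩, hmin⟩ := (Set.toFinite
    {Q : Finpartition (univ : Finset V) | Q ≤ P ∧ hcut edge Q = hcut edge P}).exists_minimal
    ⟨P, le_rfl, rfl⟩
  refine ⟨Q, hQP, fun p hp => ?_, hQcut⟩
  by_contra hconn
  obtain ⟨X, hXp, hX, hXne, hsep⟩ := exists_separated_of_not_connectedIn hconn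
  have hsplit_le := Finpartition.splitOff_le (hb := hX.ne_empty) (hba := subset_univ X) hp hXp
  exact Finpartition.splitOff_ne hp (ssubset_of_subset_of_ne hXp hXne) <| hsplit_le.antisymm
    (hmin ⟨hsplit_le.trans hQP, (hcut_splitOff hp hXp hX.ne_empty hsep).trans hQcut⟩ hsplit_le)

end

theorem stmt3_general {V E : Type*} [Fintype V] [DecidableEq V] [Fintype E]
    (edge : E → Finset V) :
    (∀ P : Finpartition (univ : Finset V), ∃ P' : Finpartition (univ : Finset V),
      Feasible edge P' ∧ P.parts.card ≤ P'.parts.card ∧ hcut edge P' = hcut edge P) ∧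
    { x : E → ℝ | (∀ e, 0 ≤ x e) ∧ ∀ P : Finpartition (univ : Finset V), Feasible edge P →
        (P.parts.card : ℝ) - 1 ≤ ∑ e ∈ hcut edge P, x e } =
    { x : E → ℝ | (∀ e, 0 ≤ x e) ∧ ∀ P : Finpartition (univ : Finset V),
        (P.parts.card : ℝ) - 1 ≤ ∑ e ∈ hcut edge P, x e } := by
  have hrefine (P : Finpartition (univ : Finset V)) :
      ∃ P' : Finpartition (univ : Finset V),
        Feasible edge P' ∧ P.parts.card ≤ P'.parts.card ∧ hcut edge P' = hcut edge P := by
    obtain ⟨P', hle, hfeas, hcut'⟩ := exists_feasible_le_hcut_eq edge P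
    exact ⟨P', hfeas, Finpartition.card_mono hle, hcut'⟩
  refine ⟨hrefine, Set.ext fun x => ⟨fun ⟨hx0, hx⟩ => ⟨hx0, fun P => ?_⟩,
    fun ⟨hx0, hx⟩ => ⟨hx0, fun P _ => hx P⟩⟩⟩
  obtain ⟨P', hfeas, hcard, hcut'⟩ := hrefine P
  calc (P.parts.card : ℝ) - 1 ≤ P'.parts.card - 1 := by gcongr
    _ ≤ ∑ e ∈ hcut edge P', x e := hx P' hfeas
    _ = ∑ e ∈ hcut edge P, x e := by rw [hcut']

/-- Every partition of `V` can be refined to a feasible partition with at least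
as many parts and the same cut; consequently the admissible set of the family of feasible
partitions equals the partition polyhedron. -/
theorem stmt3 {V E : Type*} [Fintype V] [DecidableEq V] [Fintype E] [DecidableEq E]
    (edge : E → Finset V) :
    (∀ P : Finpartition (univ : Finset V), ∃ P' : Finpartition (univ : Finset V),
      Feasible edge P' ∧ P.parts.card ≤ P'.parts.card ∧ hcut edge P' = hcut edge P) ∧
    { x : E → ℝ | (∀ e, 0 ≤ x e) ∧ ∀ P : Finpartition (univ : Finset V), Feasible edge P →
        (P.parts.card : ℝ) - 1 ≤ ∑ e ∈ hcut edge P, x e } =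
    { x : E → ℝ | (∀ e, 0 ≤ x e) ∧ ∀ P : Finpartition (univ : Finset V),
        (P.parts.card : ℝ) - 1 ≤ ∑ e ∈ hcut edge P, x e } :=
  stmt3_general edge
end

section
/- Let H = (V,E) be a connected hypergraph, let A be a multiset from E such that the hypergraph H[A] = (V, A) is a hypertree on V, and let x^A be the indicator (multiplicity) vector of A. Then for every partition 𝒫 of V with |𝒫| ≥ 2, x^A(δ(𝒫)) ≥ |𝒫| - 1; i.e., x^A lies in the partition polyhedron of H. -/
open Finset
open scoped Classical

/-- If `H` is connected and `m` is the multiplicity vector of a multiset `A`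
from `E` with `H[A]` a hypertree on `V`, then `m(δ(P)) ≥ |P| - 1` for every partition `P`
of `V` with at least two parts; i.e. `m` lies in the partition polyhedron of `H`. -/
theorem stmt4 {V E : Type*} [Fintype V] [DecidableEq V] [Fintype E] [DecidableEq E]
    (edge : E → Finset V) (hconn : HConnected edge)
    (m : E → ℕ) (hm : IsMultiTree edge m)
    (P : Finpartition (univ : Finset V)) (hP : 2 ≤ P.parts.card) :
    (P.parts.card : ℝ) - 1 ≤ ∑ e ∈ hcut edge P, (m e : ℝ) := by
  classical
  obtain ⟨hm1, hm2⟩ := hm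
  obtain ⟨p0, hp0⟩ := Finset.card_pos.mp (by omega : 0 < P.parts.card)
  obtain ⟨v0, hv0⟩ := P.nonempty_of_mem_parts hp0
  set C := hcut edge P with hC
  -- every non-cut edge with positive multiplicity lies inside some part
  have hkey : ∀ e ∈ (univ \ C).filter (fun e => m e ≠ 0),
      ∃ p ∈ P.parts, e ∈ (edgesIn edge p).filter (fun e => (edge e).Nonempty) := by
    intro e he
    simp only [Finset.mem_filter, Finset.mem_sdiff, Finset.mem_univ, true_and] at he
    obtain ⟨heC, hme⟩ := he
    have hne : (edge e).Nonempty := by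
      by_contra h
      rw [Finset.not_nonempty_iff_eq_empty] at h
      have hsub : edge e ⊆ {v0} := by simp [h]
      have hsum : (∑ e' ∈ edgesIn edge {v0}, m e') ≤ 0 := by
        have := hm2 {v0} ⟨v0, Finset.mem_singleton_self v0⟩
        simpa using this
      have he' : e ∈ edgesIn edge {v0} := by
        simp only [edgesIn, Finset.mem_filter, Finset.mem_univ, true_and]
        exact hsub
      have := Finset.single_le_sum (f := m) (fun i _ => Nat.zero_le _) he'
      omega
    obtain ⟨v, hv⟩ := hne
    obtain ⟨p, hp, hvp⟩ := P.exists_mem (Finset.mem_univ v)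
    refine ⟨p, hp, ?_⟩
    simp only [edgesIn, Finset.mem_filter, Finset.mem_univ, true_and]
    refine ⟨?_, ⟨v, hv⟩⟩
    intro w hw
    obtain ⟨q, hq, hwq⟩ := P.exists_mem (Finset.mem_univ w)
    by_cases hpq : p = q
    · exact hpq ▸ hwq
    · exfalso
      apply heC
      simp only [hC, hcut, Finset.mem_filter, Finset.mem_univ, true_and]
      exact ⟨p, hp, q, hq, hpq, ⟨v, Finset.mem_inter.mpr ⟨hv, hvp⟩⟩,
        ⟨w, Finset.mem_inter.mpr ⟨hw, hwq⟩⟩⟩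
  -- the filtered edge sets of distinct parts are disjoint
  have hdisj : (P.parts : Set (Finset V)).PairwiseDisjoint
      (fun p => (edgesIn edge p).filter (fun e => (edge e).Nonempty)) := by
    intro p hp q hq hpq
    refine Finset.disjoint_left.mpr ?_
    intro e hep heq
    simp only [edgesIn, Finset.mem_filter, Finset.mem_univ, true_and] at hep heq
    obtain ⟨v, hv⟩ := hep.2
    have hvp : v ∈ p := hep.1 hv
    have hvq : v ∈ q := heq.1 hv
    have := P.supIndep.pairwiseDisjoint hp hq hpq
    exact (Finset.disjoint_left.mp this hvp) hvq
  have hsub : (univ \ C).filter (fun e => m e ≠ 0) ⊆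
      P.parts.biUnion (fun p => (edgesIn edge p).filter (fun e => (edge e).Nonempty)) := by
    intro e he
    obtain ⟨p, hp, hep⟩ := hkey e he
    exact Finset.mem_biUnion.mpr ⟨p, hp, hep⟩
  -- bound the non-cut sum
  have hN : ∑ e ∈ univ \ C, m e ≤ ∑ p ∈ P.parts, ∑ e ∈ edgesIn edge p, m e := by
    calc ∑ e ∈ univ \ C, m e
        = ∑ e ∈ (univ \ C).filter (fun e => m e ≠ 0), m e :=
          (Finset.sum_filter_ne_zero _).symm
      _ ≤ ∑ e ∈ P.parts.biUnion
            (fun p => (edgesIn edge p).filter (fun e => (edge e).Nonempty)), m e :=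
          Finset.sum_le_sum_of_subset hsub
      _ = ∑ p ∈ P.parts, ∑ e ∈ (edgesIn edge p).filter (fun e => (edge e).Nonempty), m e :=
          Finset.sum_biUnion hdisj
      _ ≤ ∑ p ∈ P.parts, ∑ e ∈ edgesIn edge p, m e :=
          Finset.sum_le_sum (fun p _ =>
            Finset.sum_le_sum_of_subset (Finset.filter_subset _ _))
  have hpart : ∀ p ∈ P.parts, ∑ e ∈ edgesIn edge p, m e ≤ p.card - 1 :=
    fun p hp => hm2 p (P.nonempty_of_mem_parts hp)
  have hNle : ∑ e ∈ univ \ C, m e ≤ ∑ p ∈ P.parts, (p.card - 1) :=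
    hN.trans (Finset.sum_le_sum hpart)
  have hsum_parts : ∑ p ∈ P.parts, (p.card - 1) + P.parts.card = Fintype.card V := by
    have h1 : ∑ p ∈ P.parts, (p.card - 1) + P.parts.card
        = ∑ p ∈ P.parts, ((p.card - 1) + 1) := by
      rw [Finset.sum_add_distrib, Finset.sum_const, smul_eq_mul, mul_one]
    rw [h1]
    have h2 : ∀ p ∈ P.parts, (p.card - 1) + 1 = p.card := by
      intro p hp
      have := Finset.card_pos.mpr (P.nonempty_of_mem_parts hp)
      omega
    rw [Finset.sum_congr rfl h2, P.sum_card_parts, Finset.card_univ]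
  have hsplit : ∑ e ∈ univ \ C, m e + ∑ e ∈ C, m e = ∑ e, m e :=
    Finset.sum_sdiff (Finset.subset_univ C)
  have hnat : P.parts.card - 1 ≤ ∑ e ∈ C, m e := by omega
  have h2 : ((P.parts.card - 1 : ℕ) : ℝ) ≤ ((∑ e ∈ C, m e : ℕ) : ℝ) := by
    exact_mod_cast hnat
  rw [Nat.cast_sum, Nat.cast_sub (by omega : 1 ≤ P.parts.card)] at h2
  simpa using h2
end

section
/- Let H be a connected hypergraph and 𝒫 = {V₁,…,V_k} a feasible partition of V such that the shrunk hypergraph H_𝒫 has a cut vertex v_j. Then there exist two feasible partitions 𝒫₁ and 𝒫₂ of V with |𝒫₁| + |𝒫₂| = |𝒫| + 1, |𝒫₁|, |𝒫₂| ≥ 2, δ(𝒫₁) and δ(𝒫₂) disjoint with union δ(𝒫), and the vector (1/(|𝒫|-1))·1_{δ(𝒫)} is a proper convex combination of (1/(|𝒫₁|-1))·1_{δ(𝒫₁)} and (1/(|𝒫₂|-1))·1_{δ(𝒫₂)}. -/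
open Finset
open scoped Classical

/-!
Removing the cut vertex `p0` of `H_P` splits the remaining parts into two nonempty families
`A` and `B` such that no hyperedge meets both a part of `A` and a part of `B`. Merging `p0` with
all parts of `B` gives `P₁`, merging it with all parts of `A` gives `P₂`. The merged part is
connected: a hyperedge leaving a union of parts on the `B` side cannot reach `A`, so connectivity
of `H` supplies a crossing hyperedge inside the merged part. A cut hyperedge of `P` meets some part
other than `p0`, hence lies in exactly one of `δ(P₁)`, `δ(P₂)`, and since
`|P| - 1 = |A| + |B|` the weight `λ = |A| / (|A| + |B|)` gives the convex combination.
-/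

theorem indicator_div_eq_convex_combination {E : Type*} [DecidableEq E] {F₁ F₂ : Finset E}
    (h : Disjoint F₁ F₂) {a b : ℝ} (ha : 0 < a) (hb : 0 < b) (e : E) :
    1 / (a + b) * (if e ∈ F₁ ∪ F₂ then 1 else 0) =
      a / (a + b) * (1 / a * (if e ∈ F₁ then 1 else 0)) +
        (1 - a / (a + b)) * (1 / b * (if e ∈ F₂ then 1 else 0)) := by
  by_cases h₁ : e ∈ F₁
  · have h₂ : e ∉ F₂ := disjoint_left.1 h h₁
    simp only [mem_union, h₁, h₂, true_or, if_true, if_false]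
    field_simp
    ring
  · by_cases h₂ : e ∈ F₂
    · simp only [mem_union, h₁, h₂, or_true, if_true, if_false]
      field_simp
      ring
    · simp [h₁, h₂]

namespace Finset

variable {α : Type*} [DecidableEq α] {s t : Finset α} {x : α}

theorem sdiff_insert_sdiff_insert (ht : t ⊆ s) (hx : x ∉ t) :
    s \ insert x (s \ insert x t) = t := by
  ext y
  have := @ht y
  simp only [mem_sdiff, mem_insert]
  grind

theorem card_eq_card_add_card_sdiff_insert (ht : t ⊆ s) (hxs : x ∈ s) (hx : x ∉ t) :
    s.card = t.card + (s \ insert x t).card + 1 := by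
  have hts : insert x t ⊆ s := insert_subset hxs ht
  rw [card_sdiff_of_subset hts, card_insert_of_notMem hx]
  have := card_le_card hts
  rw [card_insert_of_notMem hx] at this
  omega

end Finset

namespace Finpartition

variable {α : Type*} [DistribLattice α] [OrderBot α] [DecidableEq α] {a : α}

def mergeParts (P : Finpartition a) (S : Finset α) (hS : S ⊆ P.parts) (hne : S.Nonempty) :
    Finpartition a :=
  (P.ofSubset (sdiff_subset : P.parts \ S ⊆ P.parts) rfl).extend
    (b := S.sup id)
    (by
      obtain ⟨q, hq⟩ := hne
      exact ne_bot_of_le_ne_bot (P.ne_bot (hS hq)) (le_sup (f := id) hq))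
    (Finset.disjoint_sup_left.2 fun p hp => Finset.disjoint_sup_right.2 fun q hq =>
      P.disjoint (mem_sdiff.1 hp).1 (hS hq) fun h => (mem_sdiff.1 hp).2 (h ▸ hq))
    (by rw [← sup_union, sdiff_union_of_subset hS, P.sup_parts])

variable (P : Finpartition a) {S : Finset α} (hS : S ⊆ P.parts) (hne : S.Nonempty)

theorem parts_mergeParts : (P.mergeParts S hS hne).parts = insert (S.sup id) (P.parts \ S) :=
  rfl

theorem card_mergeParts : (P.mergeParts S hS hne).parts.card = (P.parts \ S).card + 1 :=
  card_extend _ _ _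

end Finpartition

open Finpartition

section Hypergraph

variable {V E : Type*} [DecidableEq V] (edge : E → Finset V)

-- `ConnectedIn` and `ConnectedOn` are elaborated with the classical `DecidableEq V`.
theorem connectedIn_iff (W : Finset V) :
    ConnectedIn edge W ↔ ∀ X ⊆ W, X.Nonempty → X ≠ W →
      ∃ e, edge e ⊆ W ∧ (edge e ∩ X).Nonempty ∧ ((edge e ∩ W) \ X).Nonempty := by
  unfold ConnectedIn
  rw [Subsingleton.elim (fun a b => Classical.propDecidable (a = b) : DecidableEq V) ‹_›]

theorem connectedOn_iff (W : Finset V) :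
    ConnectedOn edge W ↔ ∀ X ⊆ W, X.Nonempty → X ≠ W →
      ∃ e, ((edge e ∩ W) ∩ X).Nonempty ∧ ((edge e ∩ W) \ X).Nonempty := by
  unfold ConnectedOn
  rw [Subsingleton.elim (fun a b => Classical.propDecidable (a = b) : DecidableEq V) ‹_›]

def EdgeSeparated (A B : Finset (Finset V)) : Prop :=
  ∀ e, ∀ a ∈ A, ∀ b ∈ B, (edge e ∩ a).Nonempty → (edge e ∩ b).Nonempty → False

variable {edge}

theorem EdgeSeparated.symm_iff {A B : Finset (Finset V)} :
    EdgeSeparated edge B A ↔ EdgeSeparated edge A B :=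
  ⟨fun h e a ha b hb ha' hb' => h e b hb a ha hb' ha',
    fun h e b hb a ha hb' ha' => h e a ha b hb ha' hb'⟩

theorem inter_sup_nonempty_iff {s : Finset V} {S : Finset (Finset V)} :
    (s ∩ S.sup id).Nonempty ↔ ∃ q ∈ S, (s ∩ q).Nonempty := by
  simp only [Finset.Nonempty, mem_inter, mem_sup, id]
  grind

theorem connectedIn_sup_of_forall_union {S : Finset (Finset V)}
    (hS : ∀ q ∈ S, ConnectedIn edge q)
    (hcross : ∀ Y ⊆ S.sup id, Y.Nonempty → Y ≠ S.sup id → (∀ q ∈ S, q ⊆ Y ∨ Disjoint q Y) →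
      ∃ e, edge e ⊆ S.sup id ∧ (edge e ∩ Y).Nonempty ∧ ((edge e ∩ S.sup id) \ Y).Nonempty) :
    ConnectedIn edge (S.sup id) := by
  rw [connectedIn_iff]
  intro X hXW hXne hXneW
  by_cases hsplit : ∃ q ∈ S, (q ∩ X).Nonempty ∧ ¬ q ⊆ X
  · obtain ⟨q, hq, hqX, hqnX⟩ := hsplit
    have hqW : q ⊆ S.sup id := le_sup (f := id) hq
    obtain ⟨e, heq, ⟨x, hx⟩, ⟨y, hy⟩⟩ := (connectedIn_iff edge q).1 (hS q hq) (q ∩ X)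
      inter_subset_left hqX fun h => hqnX (h ▸ inter_subset_right)
    simp only [mem_inter, mem_sdiff] at hx hy
    exact ⟨e, heq.trans hqW, ⟨x, mem_inter.2 ⟨hx.1, hx.2.2⟩⟩,
      ⟨y, mem_sdiff.2 ⟨mem_inter.2 ⟨hy.1.1, hqW hy.1.2⟩, fun hyX => hy.2 ⟨hy.1.2, hyX⟩⟩⟩⟩
  · push Not at hsplit
    refine hcross X hXW hXne hXneW fun q hq => ?_
    rcases (q ∩ X).eq_empty_or_nonempty with h | h
    · exact Or.inr (disjoint_iff_inter_eq_empty.2 h)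
    · exact Or.inl (hsplit q hq h)

variable [Fintype V]

section Hub

variable {S : Finset (Finset V)} {p0 : Finset V}

theorem exists_edge_crossing_of_disjoint
    (hside : ∀ e, ∀ q ∈ S, q ≠ p0 → (edge e ∩ q).Nonempty → edge e ⊆ S.sup id)
    (hconn : HConnected edge) {Y : Finset V}
    (hYW : Y ⊆ S.sup id) (hYne : Y.Nonempty) (hY : Y ≠ univ) (hp0Y : Disjoint p0 Y) :
    ∃ e, edge e ⊆ S.sup id ∧ (edge e ∩ Y).Nonempty ∧ ((edge e ∩ S.sup id) \ Y).Nonempty := by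
  obtain ⟨e, -, ⟨x, hx⟩, ⟨y, hy⟩⟩ := (connectedIn_iff edge univ).1 hconn Y (subset_univ _) hYne hY
  simp only [mem_inter, mem_sdiff] at hx hy
  obtain ⟨q, hq, hxq⟩ := mem_sup.1 (hYW hx.2)
  have hqp0 : q ≠ p0 := by
    rintro rfl
    exact disjoint_left.1 hp0Y hxq hx.2
  have he := hside e q hq hqp0 ⟨x, mem_inter.2 ⟨hx.1, hxq⟩⟩
  exact ⟨e, he, ⟨x, mem_inter.2 hx⟩, ⟨y, mem_sdiff.2 ⟨mem_inter.2 ⟨hy.1.1, he hy.1.1⟩, hy.2⟩⟩⟩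

theorem connectedIn_sup_of_hub
    (hside : ∀ e, ∀ q ∈ S, q ≠ p0 → (edge e ∩ q).Nonempty → edge e ⊆ S.sup id)
    (hconn : HConnected edge) (hS : ∀ q ∈ S, ConnectedIn edge q) (hp0 : p0 ∈ S) :
    ConnectedIn edge (S.sup id) := by
  refine connectedIn_sup_of_forall_union hS fun Y hYW hYne hYneW hunion => ?_
  rcases hunion p0 hp0 with hp0Y | hp0Y
  · obtain ⟨e, he, ⟨x, hx⟩, ⟨y, hy⟩⟩ := exists_edge_crossing_of_disjoint hside hconn
      (Y := S.sup id \ Y) sdiff_subset (sdiff_nonempty.2 fun h => hYneW (subset_antisymm hYW h))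
      (fun h => by obtain ⟨v, hv⟩ := hYne; exact (mem_sdiff.1 (h ▸ mem_univ v)).2 hv)
      (disjoint_of_subset_left hp0Y disjoint_sdiff)
    simp only [mem_inter, mem_sdiff, not_and, not_not] at hx hy
    exact ⟨e, he, ⟨y, mem_inter.2 ⟨hy.1.1, hy.2 hy.1.2⟩⟩, ⟨x, by simp [hx]⟩⟩
  · exact exists_edge_crossing_of_disjoint hside hconn hYW hYne
      (fun h => hYneW (subset_antisymm hYW (h ▸ subset_univ _))) hp0Y

end Hub

theorem feasible_mergeParts (hconn : HConnected edge) {P : Finpartition (univ : Finset V)}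
    (hfeas : Feasible edge P) {S : Finset (Finset V)} (hS : S ⊆ P.parts) {p0 : Finset V}
    (hp0 : p0 ∈ S) (hsep : EdgeSeparated edge (P.parts \ S) (S.erase p0)) :
    Feasible edge (P.mergeParts S hS ⟨p0, hp0⟩) := by
  intro p hp
  rcases mem_insert.1 hp with rfl | hp
  · refine connectedIn_sup_of_hub (fun e q hq hqp0 hmeet x hx => ?_) hconn
      (fun q hq => hfeas q (hS hq)) hp0
    obtain ⟨r, hr, hxr⟩ := P.exists_mem (mem_univ x)
    by_cases hrS : r ∈ S
    · exact le_sup (f := id) hrS hxr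
    · exact (hsep e r (mem_sdiff.2 ⟨hr, hrS⟩) q (mem_erase.2 ⟨hqp0, hq⟩)
        ⟨x, mem_inter.2 ⟨hx, hxr⟩⟩ hmeet).elim
  · exact hfeas p (mem_sdiff.1 hp).1

theorem exists_edgeSeparated_of_not_connectedOn {P : Finpartition (univ : Finset V)}
    (p0 : {p : Finset V // p ∈ P.parts})
    (h : ¬ ConnectedOn (shrunkEdge edge P) (univ \ {p0})) :
    ∃ A ⊆ P.parts, p0.1 ∉ A ∧ A.Nonempty ∧ (P.parts \ insert p0.1 A).Nonempty ∧
      EdgeSeparated edge A (P.parts \ insert p0.1 A) := by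
  rw [connectedOn_iff] at h
  push Not at h
  obtain ⟨X, hXW, hXne, hXneW, hX⟩ := h
  have hXp0 : ∀ a ∈ X, a ≠ p0 := fun a ha => by simpa using hXW ha
  have hsep : ∀ e, ∀ a ∈ X, ∀ b, b ≠ p0 → b ∉ X →
      (edge e ∩ a.1).Nonempty → (edge e ∩ b.1).Nonempty → False := by
    intro e a ha b hbp0 hbX hea heb
    have hb : b ∈ (shrunkEdge edge P e ∩ (univ \ {p0})) \ X := by
      simp [shrunkEdge, hbp0, hbX, heb]
    rw [hX e ⟨a, by simp [shrunkEdge, hXp0 a ha, ha, hea]⟩] at hb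
    exact notMem_empty b hb
  obtain ⟨b, hbW, hbX⟩ := exists_of_ssubset (ssubset_of_subset_of_ne hXW hXneW)
  refine ⟨X.map (Function.Embedding.subtype _), ?_, ?_, hXne.map,
    ⟨b.1, mem_sdiff.2 ⟨b.2, ?_⟩⟩, ?_⟩
  · intro p hp
    obtain ⟨a, -, rfl⟩ := mem_map.1 hp
    exact a.2
  · intro h
    obtain ⟨a, ha, hap⟩ := mem_map.1 h
    exact hXp0 a ha (Subtype.ext hap)
  · intro h
    rcases mem_insert.1 h with h | h
    · exact (mem_sdiff.1 hbW).2 (mem_singleton.2 (Subtype.ext h))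
    · obtain ⟨a, ha, hab⟩ := mem_map.1 h
      exact hbX (Subtype.ext hab ▸ ha)
  · intro e a ha q hq hea heq
    obtain ⟨a, haX, rfl⟩ := mem_map.1 ha
    simp only [mem_sdiff, mem_insert, mem_map, Function.Embedding.coe_subtype] at hq
    obtain ⟨hqP, hq⟩ := hq
    exact hsep e a haX ⟨q, hqP⟩ (fun h => hq (Or.inl (congrArg Subtype.val h)))
      (fun h => hq (Or.inr ⟨_, h, rfl⟩)) hea heq

variable [Fintype E]

theorem mem_hcut {P : Finpartition (univ : Finset V)} {e : E} :
    e ∈ hcut edge P ↔ ∃ p ∈ P.parts, ∃ q ∈ P.parts,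
      p ≠ q ∧ (edge e ∩ p).Nonempty ∧ (edge e ∩ q).Nonempty := by
  simp only [hcut, mem_filter, mem_univ, true_and]

theorem exists_mem_parts_ne_of_mem_hcut {P : Finpartition (univ : Finset V)} {e : E}
    (he : e ∈ hcut edge P) (p0 : Finset V) :
    ∃ p ∈ P.parts, p ≠ p0 ∧ (edge e ∩ p).Nonempty := by
  obtain ⟨p, hp, q, hq, hpq, hep, heq⟩ := mem_hcut.1 he
  by_cases hpp0 : p = p0
  · exact ⟨q, hq, fun h => hpq (hpp0.trans h.symm), heq⟩
  · exact ⟨p, hp, hpp0, hep⟩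

theorem mem_hcut_mergeParts {P : Finpartition (univ : Finset V)} {S : Finset (Finset V)}
    (hS : S ⊆ P.parts) (hne : S.Nonempty) {e : E} :
    e ∈ hcut edge (P.mergeParts S hS hne) ↔
      e ∈ hcut edge P ∧ ∃ p ∈ P.parts \ S, (edge e ∩ p).Nonempty := by
  set N := S.sup id
  have hN : ∀ p ∈ P.parts \ S, p ≠ N := fun p hp hpN => by
    obtain ⟨q, hq⟩ := hne
    have hqp : Disjoint q p :=
      P.disjoint (hS hq) (mem_sdiff.1 hp).1 fun h => (mem_sdiff.1 hp).2 (h ▸ hq)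
    exact P.ne_bot (hS hq) (hqp.eq_bot_of_le (hpN ▸ le_sup (f := id) hq))
  have hcutP : ∀ p ∈ P.parts \ S, ∀ m ∈ insert N (P.parts \ S), p ≠ m →
      (edge e ∩ p).Nonempty → (edge e ∩ m).Nonempty → e ∈ hcut edge P := by
    intro p hp m hm hpm hep hem
    rcases mem_insert.1 hm with rfl | hm
    · obtain ⟨r, hr, her⟩ := inter_sup_nonempty_iff.1 hem
      exact mem_hcut.2 ⟨p, (mem_sdiff.1 hp).1, r, hS hr,
        fun h => (mem_sdiff.1 hp).2 (h ▸ hr), hep, her⟩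
    · exact mem_hcut.2 ⟨p, (mem_sdiff.1 hp).1, m, (mem_sdiff.1 hm).1, hpm, hep, hem⟩
  rw [mem_hcut, parts_mergeParts]
  constructor
  · rintro ⟨p, hp, q, hq, hpq, hep, heq⟩
    rcases mem_insert.1 hp with rfl | hp
    · have hq' : q ∈ P.parts \ S := (mem_insert.1 hq).resolve_left (Ne.symm hpq)
      exact ⟨hcutP q hq' _ (mem_insert_self _ _) (Ne.symm hpq) heq hep, q, hq', heq⟩
    · exact ⟨hcutP p hp q hq hpq hep heq, p, hp, hep⟩
  · rintro ⟨he, p, hp, hep⟩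
    obtain ⟨r, hr, hrp, her⟩ := exists_mem_parts_ne_of_mem_hcut he p
    by_cases hrS : r ∈ S
    · exact ⟨p, mem_insert_of_mem hp, N, mem_insert_self _ _, hN p hp, hep,
        inter_sup_nonempty_iff.2 ⟨r, hrS, her⟩⟩
    · exact ⟨p, mem_insert_of_mem hp, r, mem_insert_of_mem (mem_sdiff.2 ⟨hr, hrS⟩),
        hrp.symm, hep, her⟩

theorem exists_feasible_coarsening (hconn : HConnected edge) {P : Finpartition (univ : Finset V)}
    (hfeas : Feasible edge P) {p0 : Finset V} (hp0 : p0 ∈ P.parts) {A : Finset (Finset V)}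
    (hA : A ⊆ P.parts) (hp0A : p0 ∉ A) (hsep : EdgeSeparated edge A (P.parts \ insert p0 A)) :
    ∃ Q : Finpartition (univ : Finset V), Feasible edge Q ∧ Q.parts.card = A.card + 1 ∧
      ∀ e, e ∈ hcut edge Q ↔ e ∈ hcut edge P ∧ ∃ a ∈ A, (edge e ∩ a).Nonempty := by
  have hA' : P.parts \ (P.parts \ A) = A := Finset.sdiff_sdiff_eq_self hA
  have hp0' : p0 ∈ P.parts \ A := mem_sdiff.2 ⟨hp0, hp0A⟩
  have hne : (P.parts \ A).Nonempty := ⟨p0, hp0'⟩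
  refine ⟨P.mergeParts (P.parts \ A) sdiff_subset hne, ?_, ?_, fun e => ?_⟩
  · exact feasible_mergeParts hconn hfeas sdiff_subset hp0' (by rwa [hA', ← sdiff_insert])
  · rw [card_mergeParts, hA']
  · rw [mem_hcut_mergeParts, hA']

theorem exists_feasible_split [DecidableEq E] (hconn : HConnected edge)
    {P : Finpartition (univ : Finset V)} (hfeas : Feasible edge P) {p0 : Finset V} (hp0 : p0 ∈ P.parts) {A : Finset (Finset V)}
    (hA : A ⊆ P.parts) (hp0A : p0 ∉ A) (hsep : EdgeSeparated edge A (P.parts \ insert p0 A)) :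
    ∃ P₁ P₂ : Finpartition (univ : Finset V), Feasible edge P₁ ∧ Feasible edge P₂ ∧
      P₁.parts.card = A.card + 1 ∧ P₂.parts.card = (P.parts \ insert p0 A).card + 1 ∧
      Disjoint (hcut edge P₁) (hcut edge P₂) ∧ hcut edge P₁ ∪ hcut edge P₂ = hcut edge P := by
  obtain ⟨P₁, hfeas₁, hcard₁, hcut₁⟩ := exists_feasible_coarsening hconn hfeas hp0 hA hp0A hsep
  obtain ⟨P₂, hfeas₂, hcard₂, hcut₂⟩ := exists_feasible_coarsening (A := P.parts \ insert p0 A)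
    hconn hfeas hp0 sdiff_subset (by simp)
    (by rwa [sdiff_insert_sdiff_insert hA hp0A, EdgeSeparated.symm_iff])
  refine ⟨P₁, P₂, hfeas₁, hfeas₂, hcard₁, hcard₂, disjoint_left.2 fun e h₁ h₂ => ?_, ?_⟩
  · obtain ⟨-, a, ha, hea⟩ := (hcut₁ e).1 h₁
    obtain ⟨-, b, hb, heb⟩ := (hcut₂ e).1 h₂
    exact hsep e a ha b hb hea heb
  ext e
  rw [mem_union, hcut₁, hcut₂]
  refine ⟨by rintro (⟨he, -⟩ | ⟨he, -⟩) <;> exact he, fun he => ?_⟩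
  obtain ⟨p, hp, hpp0, hep⟩ := exists_mem_parts_ne_of_mem_hcut he p0
  by_cases hpA : p ∈ A
  · exact Or.inl ⟨he, p, hpA, hep⟩
  · exact Or.inr ⟨he, p, mem_sdiff.2 ⟨hp, by simp [hpp0, hpA]⟩, hep⟩

end Hypergraph

/-- If `H` is connected, `P` is a feasible partition, and the shrunk
hypergraph `H_P` has a cut vertex `p0`, then `P` splits into two feasible partitions
`P₁, P₂` with `|P₁| + |P₂| = |P| + 1`, `|P₁|, |P₂| ≥ 2`, `δ(P₁), δ(P₂)` disjoint with
union `δ(P)`, and `(1/(|P|-1))·1_{δ(P)}` a proper convex combination of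
`(1/(|P₁|-1))·1_{δ(P₁)}` and `(1/(|P₂|-1))·1_{δ(P₂)}`. -/
theorem stmt5 {V E : Type*} [Fintype V] [DecidableEq V] [Fintype E] [DecidableEq E]
    (edge : E → Finset V) (hconn : HConnected edge)
    (P : Finpartition (univ : Finset V)) (hfeas : Feasible edge P)
    (p0 : {p : Finset V // p ∈ P.parts})
    (hcutvertex : ¬ ConnectedOn (shrunkEdge edge P) (univ \ {p0})) :
    ∃ P₁ P₂ : Finpartition (univ : Finset V),
      Feasible edge P₁ ∧ Feasible edge P₂ ∧
      2 ≤ P₁.parts.card ∧ 2 ≤ P₂.parts.card ∧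
      P₁.parts.card + P₂.parts.card = P.parts.card + 1 ∧
      Disjoint (hcut edge P₁) (hcut edge P₂) ∧
      hcut edge P₁ ∪ hcut edge P₂ = hcut edge P ∧
      ∃ lam : ℝ, 0 < lam ∧ lam < 1 ∧
        ∀ e : E,
          (1 / ((P.parts.card : ℝ) - 1)) * (if e ∈ hcut edge P then 1 else 0) =
            lam * ((1 / ((P₁.parts.card : ℝ) - 1)) * (if e ∈ hcut edge P₁ then 1 else 0)) +
            (1 - lam) * ((1 / ((P₂.parts.card : ℝ) - 1)) * (if e ∈ hcut edge P₂ then 1 else 0)) := by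
  obtain ⟨A, hA, hp0A, hAne, hBne, hsep⟩ := exists_edgeSeparated_of_not_connectedOn p0 hcutvertex
  obtain ⟨P₁, P₂, hfeas₁, hfeas₂, hcard₁, hcard₂, hdisj, hunion⟩ :=
    exists_feasible_split hconn hfeas p0.2 hA hp0A hsep
  have hcard := card_eq_card_add_card_sdiff_insert hA p0.2 hp0A
  have ha := hAne.card_pos
  have hb := hBne.card_pos
  refine ⟨P₁, P₂, hfeas₁, hfeas₂, by omega, by omega, by omega, hdisj, hunion,
    A.card / (A.card + (P.parts \ insert p0.1 A).card), by positivity,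
    (div_lt_one (by positivity)).2 (by simpa using hb), fun e => ?_⟩
  rw [← hunion, hcard, hcard₁, hcard₂]
  push_cast
  simpa only [add_sub_cancel_right] using indicator_div_eq_convex_combination hdisj
    (Nat.cast_pos.2 ha) (Nat.cast_pos.2 hb) e
end

section
/- Let H = (V,E) be a connected hypergraph and 𝒫 a feasible partition of V whose shrunk hypergraph H_𝒫 is vertex-biconnected. Then the vector w = (1/(|𝒫|-1))·1_{δ(𝒫)} is an extreme point of the admissible set Adm(Ω(H)) = {ρ ∈ ℝ^E_{≥0} : x·ρ ≥ 1 for all x ∈ Ω(H)}. -/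
open Finset
open scoped Classical

/-!
Every multi-tree crosses `δ(P)` at least `|P| - 1` times, since only `|V| - |P|` of its edges fit
inside the parts; so `w` is admissible. If `w` is the midpoint of admissible `y` and `z`, both
vanish off `δ(P)`, and both have value exactly `1` on every multi-tree on which `w` has value `1`.
Biconnectivity of `H_P` supplies many such tight trees: for a part `a`, a spanning tree `B` of
`H_P - a`, plus any cut edge at `a`, expanded by spanning trees inside the parts, is one. Comparing
two of them shows that `y` agrees on cut edges sharing a part, hence, `H_P` being connected, is
constant on `δ(P)`; tightness then forces the constant to be `1 / (|P| - 1)`.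
-/

/-- `Grows ed X M Y`: `Y` is reached from `X` by attaching one new vertex at a time, each through
a hyperedge (recorded in `M`) that also meets the current set. -/
inductive Grows {α ι : Type*} (ed : ι → Finset α) :
    Finset α → Multiset ι → Finset α → Prop
  | refl (X : Finset α) : Grows ed X 0 X
  | attach {X Y : Finset α} {M : Multiset ι} {e : ι} {a b : α} (ha : a ∈ X) (hb : b ∉ X)
      (hae : a ∈ ed e) (hbe : b ∈ ed e) (h : Grows ed (X.cons b hb) M Y) :
      Grows ed X (e ::ₘ M) Y

namespace Grows

variable {α ι : Type*} {ed : ι → Finset α} {X Y Z : Finset α} {M N : Multiset ι}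

theorem subset (h : Grows ed X M Y) : X ⊆ Y := by
  induction h with
  | refl => exact Subset.rfl
  | attach _ _ _ _ _ ih => exact (subset_cons _).trans ih

theorem card_eq (h : Grows ed X M Y) : #Y = #X + Multiset.card M := by
  induction h with
  | refl => simp
  | attach _ _ _ _ _ ih => rw [ih, card_cons, Multiset.card_cons]; ring

theorem trans (h : Grows ed X M Y) (h' : Grows ed Y N Z) : Grows ed X (M + N) Z := by
  induction h with
  | refl => simpa using h'
  | attach ha hb hae hbe _ ih => rw [Multiset.cons_add]; exact attach ha hb hae hbe (ih h')

theorem exists_ne_of_mem (h : Grows ed X M Y) {e : ι} (he : e ∈ M) :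
    ∃ a ∈ ed e, ∃ b ∈ ed e, a ≠ b := by
  induction h with
  | refl => simp at he
  | @attach X Y M e' a b ha hb hae hbe _ ih =>
    rcases Multiset.mem_cons.mp he with rfl | he
    · exact ⟨a, hae, b, hbe, fun hab => hb (hab ▸ ha)⟩
    · exact ih he

variable [DecidableEq α]

theorem union_right (h : Grows ed X M Y) {C : Finset α} (hC : Disjoint C (Y \ X)) :
    Grows ed (X ∪ C) M (Y ∪ C) := by
  induction h with
  | refl => exact refl _
  | @attach X Y M e a b ha hb hae hbe h ih =>
    have hbC : b ∉ C := fun hbC =>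
      disjoint_left.mp hC hbC (mem_sdiff.mpr ⟨h.subset (mem_cons_self b X), hb⟩)
    refine attach (mem_union_left _ ha) (by simp [hb, hbC]) hae hbe ?_
    rw [cons_eq_insert, ← insert_union, ← cons_eq_insert]
    exact ih (hC.mono_right (sdiff_subset_sdiff Subset.rfl (subset_cons _)))

/-- Every attaching edge inside `Z` brings a new vertex of `Z`; when `Z` misses `X`, the first
vertex of `Z` is brought by an edge not inside `Z`. -/
theorem card_filter_add_le (h : Grows ed X M Y) (hZ : (Z ∩ Y).Nonempty) :
    Multiset.card (M.filter (ed · ⊆ Z)) + max #(Z ∩ X) 1 ≤ #(Z ∩ Y) := by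
  induction h with
  | refl X =>
    have := hZ.card_pos
    simp only [Multiset.filter_zero, Multiset.card_zero, zero_add]
    omega
  | @attach X Y M e a b ha hb hae hbe h ih =>
    have := ih hZ
    rw [cons_eq_insert] at this
    have hins : #(Z ∩ X) ≤ #(Z ∩ insert b X) :=
      card_le_card (inter_subset_inter_left (subset_insert b X))
    by_cases heZ : ed e ⊆ Z
    · have hbX : #(Z ∩ insert b X) = #(Z ∩ X) + 1 := by
        rw [inter_insert_of_mem (heZ hbe), card_insert_of_notMem (by simp [hb])]
      have haZX : 0 < #(Z ∩ X) := card_pos.mpr ⟨a, mem_inter.mpr ⟨heZ hae, ha⟩⟩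
      rw [Multiset.filter_cons_of_pos (p := (ed · ⊆ Z)) M heZ, Multiset.card_cons]
      omega
    · rw [Multiset.filter_cons_of_neg (p := (ed · ⊆ Z)) M heZ]
      omega

theorem exists_of_crossing {W : Finset α} {p : ι → Prop}
    (hW : ∀ X ⊆ W, X.Nonempty → X ≠ W →
      ∃ e, p e ∧ (ed e ∩ X).Nonempty ∧ ((ed e ∩ W) \ X).Nonempty)
    {X : Finset α} (hXW : X ⊆ W) (hX : X.Nonempty) :
    ∃ M, Grows ed X M W ∧ ∀ e ∈ M, p e := by
  by_cases hXeq : X = W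
  · exact ⟨0, hXeq ▸ refl X, by simp⟩
  obtain ⟨e, hpe, ⟨a, ha⟩, ⟨b, hb⟩⟩ := hW X hXW hX hXeq
  simp only [mem_inter, mem_sdiff] at ha hb
  have : #(W \ insert b X) < #(W \ X) := by
    rw [sdiff_insert]
    exact card_erase_lt_of_mem (mem_sdiff.mpr ⟨hb.1.2, hb.2⟩)
  obtain ⟨M, hM, hMp⟩ := exists_of_crossing hW (insert_subset hb.1.2 hXW) (insert_nonempty b X)
  refine ⟨e ::ₘ M, attach ha.2 hb.2 ha.1 hb.1.1 (by rwa [cons_eq_insert]), fun g hg => ?_⟩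
  rcases Multiset.mem_cons.mp hg with rfl | hg
  exacts [hpe, hMp g hg]
termination_by #(W \ X)

end Grows

theorem ConnectedIn.exists_grows {α ι : Type*} {ed : ι → Finset α} {W X : Finset α}
    (hW : ConnectedIn ed W) (hXW : X ⊆ W) (hX : X.Nonempty) :
    ∃ M, Grows ed X M W ∧ ∀ e ∈ M, ed e ⊆ W :=
  Grows.exists_of_crossing hW hXW hX

theorem ConnectedOn.exists_grows {α ι : Type*} {ed : ι → Finset α} {W X : Finset α}
    (hW : ConnectedOn ed W) (hXW : X ⊆ W) (hX : X.Nonempty) :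
    ∃ M, Grows ed X M W := by
  obtain ⟨M, hM, -⟩ := Grows.exists_of_crossing (p := fun _ => True) (fun Y hY hYne hYW => by
    obtain ⟨e, h1, h2⟩ := hW Y hY hYne hYW
    exact ⟨e, trivial, h1.mono (inter_subset_inter_right inter_subset_left), h2⟩) hXW hX
  exact ⟨M, hM⟩

theorem Grows.isMultiTree {V E : Type*} [Fintype V] [DecidableEq V] [Fintype E]
    [DecidableEq E] {edge : E → Finset V} {v : V} {M : Multiset E} (h : Grows edge {v} M univ) :
    IsMultiTree edge (M.count ·) := by
  refine ⟨?_, fun X hX => ?_⟩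
  · rw [Multiset.sum_count_eq_card (fun _ _ => mem_univ _), ← card_univ, h.card_eq]
    simp
  · have := h.card_filter_add_le (Z := X) (by simpa using hX)
    have hsum : ∑ e ∈ edgesIn edge X, M.count e = Multiset.card (M.filter (edge · ⊆ X)) := by
      rw [← Multiset.sum_count_eq_card (s := univ) (fun _ _ => mem_univ _)]
      simp [edgesIn, Multiset.count_filter, sum_ite]
    rw [hsum]
    simp only [inter_univ] at this
    have : #(X ∩ {v}) ≤ 1 := (card_le_card inter_subset_right).trans_eq (card_singleton v)
    omega

section Partition

variable {V E : Type*} [Fintype V] [DecidableEq V] {edge : E → Finset V}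
  {P : Finpartition (univ : Finset V)}

@[simp]
theorem mem_shrunkEdge {e : E} {p : {p // p ∈ P.parts}} :
    p ∈ shrunkEdge edge P e ↔ (edge e ∩ p.1).Nonempty := by
  simp [shrunkEdge]

variable [Fintype E]

theorem mem_hcut_iff {e : E} :
    e ∈ hcut edge P ↔
      ∃ p ∈ shrunkEdge edge P e, ∃ q ∈ shrunkEdge edge P e, p ≠ q := by
  simp only [hcut, mem_filter, mem_univ, true_and, mem_shrunkEdge]
  constructor
  · rintro ⟨p, hp, q, hq, hpq, hpe, hqe⟩
    exact ⟨⟨p, hp⟩, hpe, ⟨q, hq⟩, hqe, fun h => hpq (congrArg Subtype.val h)⟩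
  · rintro ⟨p, hpe, q, hqe, hpq⟩
    exact ⟨p.1, p.2, q.1, q.2, fun h => hpq (Subtype.ext h), hpe, hqe⟩

theorem shrunkEdge_nonempty {e : E} (he : e ∈ hcut edge P) : (shrunkEdge edge P e).Nonempty :=
  let ⟨p, hp, _⟩ := mem_hcut_iff.mp he
  ⟨p, hp⟩

theorem exists_mem_shrunkEdge_ne {e : E} (he : e ∈ hcut edge P) (a : {p // p ∈ P.parts}) :
    ∃ b ∈ shrunkEdge edge P e, b ≠ a := by
  obtain ⟨p, hp, q, hq, hpq⟩ := mem_hcut_iff.mp he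
  by_cases hpa : p = a
  exacts [⟨q, hq, fun h => hpq (hpa.trans h.symm)⟩, ⟨p, hp, hpa⟩]

theorem notMem_hcut_of_subset {e : E} {p : Finset V} (hp : p ∈ P.parts) (hep : edge e ⊆ p) :
    e ∉ hcut edge P := by
  simp only [hcut, mem_filter, mem_univ, true_and, not_exists, not_and]
  rintro q hq r hr hqr ⟨x, hx⟩ ⟨y, hy⟩
  rw [mem_inter] at hx hy
  exact hqr ((P.eq_of_mem_parts hq hp hx.2 (hep hx.1)).trans
    (P.eq_of_mem_parts hp hr (hep hy.1) hy.2))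

theorem exists_mem_parts_subset_of_notMem_hcut (hP : P.parts.Nonempty) {e : E}
    (he : e ∉ hcut edge P) : ∃ p ∈ P.parts, edge e ⊆ p := by
  obtain ⟨x, hx⟩ | hempty := (edge e).eq_empty_or_nonempty.symm
  · obtain ⟨p, hp, hxp⟩ := P.exists_mem (mem_univ x)
    refine ⟨p, hp, fun u hu => ?_⟩
    obtain ⟨q, hq, huq⟩ := P.exists_mem (mem_univ u)
    by_contra hup
    refine he (mem_hcut_iff.mpr
      ⟨⟨p, hp⟩, ?_, ⟨q, hq⟩, ?_, fun h => hup (Subtype.mk.inj h ▸ huq)⟩)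
    exacts [mem_shrunkEdge.mpr ⟨x, mem_inter.mpr ⟨hx, hxp⟩⟩,
      mem_shrunkEdge.mpr ⟨u, mem_inter.mpr ⟨hu, huq⟩⟩]
  · obtain ⟨p, hp⟩ := hP
    exact ⟨p, hp, by simp [hempty]⟩

theorem card_parts_sub_one_le_sum_hcut {m : E → ℕ} (hm : IsMultiTree edge m) :
    #P.parts - 1 ≤ ∑ e ∈ hcut edge P, m e := by
  obtain hP | hP := P.parts.eq_empty_or_nonempty
  · simp [hP]
  have hinside : ∑ e ∈ univ \ hcut edge P, m e ≤ ∑ p ∈ P.parts, (#p - 1) :=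
    calc ∑ e ∈ univ \ hcut edge P, m e
        ≤ ∑ e ∈ univ \ hcut edge P, ∑ p ∈ P.parts, if edge e ⊆ p then m e else 0 := by
          refine sum_le_sum fun e he => ?_
          obtain ⟨p, hp, hep⟩ :=
            exists_mem_parts_subset_of_notMem_hcut hP (mem_sdiff.mp he).2
          exact (if_pos hep).symm.le.trans
            (single_le_sum (f := fun p => if edge e ⊆ p then m e else 0) (by simp) hp)
      _ ≤ ∑ e, ∑ p ∈ P.parts, if edge e ⊆ p then m e else 0 :=
          sum_le_sum_of_subset (subset_univ _)
      _ = ∑ p ∈ P.parts, ∑ e ∈ edgesIn edge p, m e := by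
          rw [sum_comm]; simp [edgesIn, sum_filter]
      _ ≤ ∑ p ∈ P.parts, (#p - 1) :=
          sum_le_sum fun p hp => hm.2 p (P.nonempty_of_mem_parts hp)
  have hparts : ∑ p ∈ P.parts, (#p - 1) + #P.parts = Fintype.card V := by
    rw [card_eq_sum_ones, ← sum_add_distrib, ← card_univ, ← P.sum_card_parts]
    exact sum_congr rfl fun p hp => Nat.sub_add_cancel (P.nonempty_of_mem_parts hp).card_pos
  have hsplit := sum_sdiff (f := m) (subset_univ (hcut edge P))
  have htotal := hm.1
  omega

theorem disjoint_biUnion_val {S : Finset {p // p ∈ P.parts}} {q : {p // p ∈ P.parts}}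
    (hq : q ∉ S) : Disjoint (S.biUnion Subtype.val) q.1 := by
  refine disjoint_left.mpr fun x hx hxq => ?_
  obtain ⟨p, hp, hxp⟩ := mem_biUnion.mp hx
  exact hq (Subtype.ext (P.eq_of_mem_parts p.2 q.2 hxp hxq) ▸ hp)

/-- A growth of the shrunk hypergraph lifts to `H`: each attached part is entered through the
attaching edge and then spanned by edges inside it. -/
theorem Grows.lift (hfeas : Feasible edge P) {Xb Yb : Finset {p // p ∈ P.parts}}
    {Mb : Multiset E} (h : Grows (shrunkEdge edge P) Xb Mb Yb) :
    ∃ N : Multiset E, (∀ e ∈ N, e ∉ hcut edge P) ∧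
      Grows edge (Xb.biUnion Subtype.val) (Mb + N) (Yb.biUnion Subtype.val) := by
  induction h with
  | refl => exact ⟨0, by simp, by simpa using Grows.refl _⟩
  | @attach Xb Yb Mb e p q hp hq hpe hqe _ ih =>
    obtain ⟨N, hN, hgrow⟩ := ih
    obtain ⟨u, hu⟩ := mem_shrunkEdge.mp hpe
    obtain ⟨v, hv⟩ := mem_shrunkEdge.mp hqe
    rw [mem_inter] at hu hv
    have hdisj := disjoint_biUnion_val hq
    obtain ⟨Nq, hNq, hNq_in⟩ :=
      (hfeas q.1 q.2).exists_grows (singleton_subset_iff.mpr hv.2) (singleton_nonempty v)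
    have hq_grow : Grows edge (insert v (Xb.biUnion Subtype.val)) Nq
        (q.1 ∪ Xb.biUnion Subtype.val) := by
      rw [insert_eq]
      exact hNq.union_right (hdisj.mono_right sdiff_subset)
    rw [cons_eq_insert, biUnion_insert] at hgrow
    refine ⟨Nq + N, fun g hg => ?_, ?_⟩
    · rcases Multiset.mem_add.mp hg with hg | hg
      exacts [notMem_hcut_of_subset q.2 (hNq_in g hg), hN g hg]
    · have hv_out : v ∉ Xb.biUnion Subtype.val := disjoint_right.mp hdisj hv.2
      have := Grows.attach (mem_biUnion.mpr ⟨p, hp, hu.2⟩) hv_out hu.1 hv.1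
        (by rw [cons_eq_insert]; exact hq_grow.trans hgrow)
      rwa [Multiset.cons_add, add_left_comm]

theorem biUnion_univ_val : (univ : Finset {p // p ∈ P.parts}).biUnion Subtype.val = univ :=
  eq_univ_iff_forall.mpr fun x => by
    obtain ⟨p, hp, hxp⟩ := P.exists_mem (mem_univ x)
    exact mem_biUnion.mpr ⟨⟨p, hp⟩, mem_univ _, hxp⟩

theorem exists_base_isMultiTree [DecidableEq E] (hfeas : Feasible edge P) (hP : 2 ≤ #P.parts)
    (a : {p // p ∈ P.parts}) (ha : ConnectedOn (shrunkEdge edge P) (univ \ {a})) :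
    ∃ B : Multiset E, Multiset.card B = #P.parts - 2 ∧ (∀ g ∈ B, g ∈ hcut edge P) ∧
      ∀ e ∈ hcut edge P, a ∈ shrunkEdge edge P e →
        ∃ N : Multiset E, (∀ g ∈ N, g ∉ hcut edge P) ∧
          IsMultiTree edge ((e ::ₘ B + N).count ·) := by
  have hW : #(univ \ {a}) = #P.parts - 1 := by simp [card_sdiff]
  obtain ⟨r, hr⟩ : (univ \ {a}).Nonempty := card_pos.mp (by omega)
  obtain ⟨B, hB⟩ := ha.exists_grows (singleton_subset_iff.mpr hr) (singleton_nonempty r)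
  refine ⟨B, ?_, fun g hg => ?_, fun e he hae => ?_⟩
  · have := hB.card_eq
    rw [card_singleton, hW] at this
    omega
  · obtain ⟨p, hp, q, hq, hpq⟩ := hB.exists_ne_of_mem hg
    exact mem_hcut_iff.mpr ⟨p, hp, q, hq, hpq⟩
  obtain ⟨b, hbe, hba⟩ := exists_mem_shrunkEdge_ne he a
  have hgrow_shrunk : Grows (shrunkEdge edge P) {r} (B + {e}) univ := by
    refine hB.trans (Grows.attach (by simpa using hba) (by simp) hbe hae ?_)
    convert Grows.refl (ed := shrunkEdge edge P) univ
    ext; simp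
  obtain ⟨N, hN, hgrow⟩ := hgrow_shrunk.lift hfeas
  rw [singleton_biUnion, biUnion_univ_val] at hgrow
  obtain ⟨v, hv⟩ := P.nonempty_of_mem_parts r.2
  obtain ⟨Nr, hNr, hNr_in⟩ :=
    (hfeas r.1 r.2).exists_grows (singleton_subset_iff.mpr hv) (singleton_nonempty v)
  refine ⟨Nr + N, fun g hg => ?_, ?_⟩
  · rcases Multiset.mem_add.mp hg with hg | hg
    exacts [notMem_hcut_of_subset r.2 (hNr_in g hg), hN g hg]
  · convert (hNr.trans hgrow).isMultiTree using 3
    rw [← Multiset.singleton_add]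
    abel

end Partition

theorem ConnectedIn.eq_of_inter_nonempty {α ι β : Type*} [Fintype α] [DecidableEq α]
    {ed : ι → Finset α} (hc : ConnectedIn ed univ) {D : Set ι}
    (hD : ∀ e, ∀ a ∈ ed e, ∀ b ∈ ed e, a ≠ b → e ∈ D)
    {f : ι → β} (hf : ∀ e ∈ D, ∀ g ∈ D, (ed e ∩ ed g).Nonempty → f e = f g)
    {e g : ι} (he : e ∈ D) (hg : g ∈ D) (he' : (ed e).Nonempty) (hg' : (ed g).Nonempty) :
    f e = f g := by
  set U := univ.filter fun x => ∃ h ∈ D, x ∈ ed h ∧ f h = f g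
  have hU : U = univ := by
    by_contra hU
    obtain ⟨x, hx⟩ := hg'
    obtain ⟨h', -, ⟨y, hy⟩, ⟨z, hz⟩⟩ :=
      hc U (subset_univ U) ⟨x, by simpa [U] using ⟨g, hg, hx, rfl⟩⟩ hU
    simp only [U, mem_inter, mem_sdiff, mem_filter, mem_univ, true_and] at hy hz
    obtain ⟨h, hh, hyh, hfh⟩ := hy.2
    have hh' : h' ∈ D := hD h' y hy.1 z hz.1.1 (fun hyz => hz.2 (hyz ▸ hy.2))
    have hfh' : f h' = f h := hf h' hh' h hh ⟨y, mem_inter.mpr ⟨hy.1, hyh⟩⟩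
    exact hz.2 ⟨h', hh', hz.1.1, hfh'.trans hfh⟩
  obtain ⟨x, hx⟩ := he'
  obtain ⟨h, hh, hxh, hfh⟩ := (mem_filter.mp (hU ▸ mem_univ x : x ∈ U)).2
  exact (hf e he h hh ⟨x, mem_inter.mpr ⟨hx, hxh⟩⟩).trans hfh

section Midpoint

variable {E : Type*} [Fintype E] {G : Set (E → ℝ)} {w y z : E → ℝ}

theorem sum_count_mul_eq_sum_map [DecidableEq E] (M : Multiset E) (ρ : E → ℝ) :
    ∑ e, (M.count e : ℝ) * ρ e = (M.map ρ).sum := by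
  rw [Finset.sum_multiset_map_count]
  simp only [nsmul_eq_mul]
  exact (sum_subset (subset_univ _) fun e _ he => by simp_all).symm

theorem eq_zero_of_midpoint (hy : y ∈ AdmSet G) (hz : z ∈ AdmSet G)
    (hmid : ∀ e, w e = (y e + z e) / 2) {e : E} (he : w e = 0) : y e = 0 := by
  linarith [hy.1 e, hz.1 e, hmid e]

theorem dot_eq_one_of_midpoint (hy : y ∈ AdmSet G) (hz : z ∈ AdmSet G)
    (hmid : ∀ e, w e = (y e + z e) / 2) {x : E → ℝ} (hx : x ∈ G)
    (hxw : ∑ e, x e * w e = 1) :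
    ∑ e, x e * y e = 1 := by
  have hsum : ∑ e, x e * y e + ∑ e, x e * z e = 2 := by
    rw [← sum_add_distrib, ← mul_one 2, ← hxw, mul_sum]
    exact sum_congr rfl fun e _ => by rw [hmid e]; ring
  linarith [hy.2 x hx, hz.2 x hx]

end Midpoint

section Extreme

variable {V E : Type*} [Fintype V] [DecidableEq V] [Fintype E] [DecidableEq E]
  {edge : E → Finset V} {P : Finpartition (univ : Finset V)}

variable (edge P) in
noncomputable def cutWeight : E → ℝ :=
  fun e => (1 / ((#P.parts : ℝ) - 1)) * (if e ∈ hcut edge P then 1 else 0)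

theorem cutWeight_of_mem {e : E} (he : e ∈ hcut edge P) :
    cutWeight edge P e = 1 / ((#P.parts : ℝ) - 1) := by
  simp [cutWeight, he]

theorem cutWeight_of_notMem {e : E} (he : e ∉ hcut edge P) : cutWeight edge P e = 0 := by
  simp [cutWeight, he]

theorem cast_card_parts_sub_one_pos (hP : 2 ≤ #P.parts) : (0 : ℝ) < #P.parts - 1 := by
  have : (2 : ℝ) ≤ #P.parts := by exact_mod_cast hP
  linarith

theorem cutWeight_mem_admSet (hP : 2 ≤ #P.parts) :
    cutWeight edge P ∈ AdmSet (OmegaSet edge) := by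
  have hk := cast_card_parts_sub_one_pos hP
  refine ⟨fun e => by unfold cutWeight; positivity, ?_⟩
  rintro _ ⟨m, hm, rfl⟩
  have hcut_sum : (#P.parts : ℝ) - 1 ≤ ∑ e ∈ hcut edge P, (m e : ℝ) := by
    have := card_parts_sub_one_le_sum_hcut (P := P) hm
    rw [← Nat.cast_sum, ← Nat.cast_one, ← Nat.cast_sub (by omega)]
    exact_mod_cast this
  calc (1 : ℝ) ≤ (∑ e ∈ hcut edge P, (m e : ℝ)) / (#P.parts - 1) := by
        rwa [le_div_iff₀ hk, one_mul]
    _ = ∑ e, (m e : ℝ) * cutWeight edge P e := by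
        simp only [cutWeight, mul_ite, mul_one, mul_zero, ← sum_filter, filter_mem_eq_inter,
          univ_inter, sum_div]
        exact sum_congr rfl fun e _ => by ring

theorem sum_count_cons_add_mul {e : E} {B N : Multiset E} {ρ : E → ℝ}
    (hN : ∀ g ∈ N, ρ g = 0) :
    ∑ g, ((e ::ₘ B + N).count g : ℝ) * ρ g = ρ e + (B.map ρ).sum := by
  rw [sum_count_mul_eq_sum_map, Multiset.map_add, Multiset.sum_add,
    Multiset.sum_eq_zero (s := N.map ρ) (by simpa using hN), add_zero, Multiset.map_cons,
    Multiset.sum_cons]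

theorem exists_base_add_sum_map_eq_one (hfeas : Feasible edge P) (hP : 2 ≤ #P.parts)
    {a : {p // p ∈ P.parts}} (ha : ConnectedOn (shrunkEdge edge P) (univ \ {a}))
    {y z : E → ℝ} (hy : y ∈ AdmSet (OmegaSet edge)) (hz : z ∈ AdmSet (OmegaSet edge))
    (hmid : ∀ e, cutWeight edge P e = (y e + z e) / 2) :
    ∃ B : Multiset E, Multiset.card B = #P.parts - 2 ∧ (∀ g ∈ B, g ∈ hcut edge P) ∧
      ∀ e ∈ hcut edge P, a ∈ shrunkEdge edge P e → y e + (B.map y).sum = 1 := by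
  obtain ⟨B, hBcard, hBcut, htree⟩ := exists_base_isMultiTree hfeas hP a ha
  refine ⟨B, hBcard, hBcut, fun e he hae => ?_⟩
  obtain ⟨N, hN, hT⟩ := htree e he hae
  have hwT : ∑ g, ((e ::ₘ B + N).count g : ℝ) * cutWeight edge P g = 1 := by
    rw [sum_count_cons_add_mul fun g hg => cutWeight_of_notMem (hN g hg), cutWeight_of_mem he,
      Multiset.map_congr rfl fun g hg => cutWeight_of_mem (hBcut g hg)]
    have hk := (cast_card_parts_sub_one_pos hP).ne'
    simp only [Multiset.map_const', Multiset.sum_replicate, nsmul_eq_mul, hBcard,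
      Nat.cast_sub hP]
    field_simp
    ring
  have := dot_eq_one_of_midpoint hy hz hmid ⟨_, hT, rfl⟩ hwT
  rwa [sum_count_cons_add_mul fun g hg =>
    eq_zero_of_midpoint hy hz hmid (cutWeight_of_notMem (hN g hg))] at this

theorem eq_cutWeight_of_midpoint (hfeas : Feasible edge P) (hP : 2 ≤ #P.parts)
    (hbc : ShrunkBiconnected edge P) {y z : E → ℝ} (hy : y ∈ AdmSet (OmegaSet edge))
    (hz : z ∈ AdmSet (OmegaSet edge)) (hmid : ∀ e, cutWeight edge P e = (y e + z e) / 2) :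
    y = cutWeight edge P := by
  have hbase a := exists_base_add_sum_map_eq_one hfeas hP (hbc.2 a) hy hz hmid
  have hconst : ∀ e ∈ hcut edge P, ∀ g ∈ hcut edge P, y e = y g := fun e he g hg =>
    hbc.1.eq_of_inter_nonempty (D := {e | e ∈ hcut edge P})
      (fun e a ha b hb hab => mem_hcut_iff.mpr ⟨a, ha, b, hb, hab⟩)
      (fun e he g hg ⟨a, ha⟩ => by
        obtain ⟨B, -, -, hB⟩ := hbase a
        rw [mem_inter] at ha
        linarith [hB e he ha.1, hB g hg ha.2])
      he hg (shrunkEdge_nonempty he) (shrunkEdge_nonempty hg)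
  funext g
  by_cases hg : g ∈ hcut edge P
  · obtain ⟨a, ha⟩ := shrunkEdge_nonempty hg
    obtain ⟨B, hBcard, hBcut, hB⟩ := hbase a
    have := hB g hg ha
    rw [Multiset.map_congr rfl fun h hh => hconst h (hBcut h hh) g hg] at this
    simp only [Multiset.map_const', Multiset.sum_replicate, nsmul_eq_mul, hBcard,
      Nat.cast_sub hP] at this
    rw [cutWeight_of_mem hg, eq_div_iff (cast_card_parts_sub_one_pos hP).ne']
    push_cast at this
    linarith
  · rw [cutWeight_of_notMem hg]
    exact eq_zero_of_midpoint hy hz hmid (cutWeight_of_notMem hg)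

end Extreme

theorem stmt7_general {V E : Type*} [Fintype V] [DecidableEq V] [Fintype E] [DecidableEq E]
    (edge : E → Finset V)
    (P : Finpartition (univ : Finset V)) (hfeas : Feasible edge P)
    (hP : 2 ≤ P.parts.card) (hbc : ShrunkBiconnected edge P) :
    IsExtremePt (AdmSet (OmegaSet edge))
      (fun e => (1 / ((P.parts.card : ℝ) - 1)) * (if e ∈ hcut edge P then 1 else 0)) := by
  refine ⟨cutWeight_mem_admSet hP, fun y hy z hz hmid => ?_⟩
  rw [eq_cutWeight_of_midpoint hfeas hP hbc hy hz hmid,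
    eq_cutWeight_of_midpoint hfeas hP hbc hz hy fun e => (hmid e).trans (by ring)]

/-- If `H` is connected and `P` is a feasible partition (with at least two
parts) whose shrunk hypergraph `H_P` is vertex-biconnected, then
`w = (1/(|P|-1))·1_{δ(P)}` is an extreme point of `Adm(Ω(H))`. -/
theorem stmt7 {V E : Type*} [Fintype V] [DecidableEq V] [Fintype E] [DecidableEq E]
    (edge : E → Finset V) (hconn : HConnected edge)
    (P : Finpartition (univ : Finset V)) (hfeas : Feasible edge P)
    (hP : 2 ≤ P.parts.card) (hbc : ShrunkBiconnected edge P) :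
    IsExtremePt (AdmSet (OmegaSet edge))
      (fun e => (1 / ((P.parts.card : ℝ) - 1)) * (if e ∈ hcut edge P then 1 else 0)) :=
  stmt7_general edge P hfeas hP hbc
end

section
/- There exists a partition-connected hypergraph H and weights σ > 0 on its hyperedges such that Mod_{1,σ}(Γ(H)) ≠ S_σ(H), where Γ(H) is the family of hypertrees of H. In particular, for H with three vertices and two parallel hyperedges both equal to the whole vertex set, and σ = (1,2), one has S_σ(H) = 3/2 while Mod_{1,σ}(Γ(H)) = 1. -/
open Finset
open scoped Classical

/-- A partition-connected hypergraph (three vertices, two parallel hyperedges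
equal to the whole vertex set) and weights `σ = (1,2)` with `S_σ(H) = 3/2` while
`Mod_{1,σ}(Γ(H)) = 1`; in particular they differ. -/
theorem stmt10 (edge : Fin 2 → Finset (Fin 3)) (hedge : ∀ e, edge e = Finset.univ)
    (σ : Fin 2 → ℝ) (hσ : σ = ![1, 2]) :
    PartitionConnected edge ∧
    strengthW σ edge = 3 / 2 ∧
    Mod1 σ (GammaSet edge) = 1 ∧
    Mod1 σ (GammaSet edge) ≠ strengthW σ edge := by
  subst hσ
  -- hcut is everything for any partition with ≥ 2 parts
  have hcutU : ∀ P : Finpartition (Finset.univ : Finset (Fin 3)), 2 ≤ P.parts.card →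
      hcut edge P = Finset.univ := by
    intro P hP
    apply Finset.eq_univ_of_forall
    intro e
    simp only [hcut, Finset.mem_filter, Finset.mem_univ, true_and]
    obtain ⟨p, hp, q, hq, hpq⟩ := Finset.one_lt_card.mp hP
    refine ⟨p, hp, q, hq, hpq, ?_, ?_⟩
    · rw [hedge e, Finset.univ_inter]; exact P.nonempty_of_mem_parts hp
    · rw [hedge e, Finset.univ_inter]; exact P.nonempty_of_mem_parts hq
  have hPC : PartitionConnected edge := by
    intro P
    by_cases hP : 2 ≤ P.parts.card
    · have h3 : P.parts.card ≤ 3 := le_trans P.card_parts_le_card (by simp)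
      have h2 : (hcut edge P).card = 2 := by rw [hcutU P hP]; simp
      omega
    · omega
  have hsum : ∀ P : Finpartition (Finset.univ : Finset (Fin 3)), 2 ≤ P.parts.card →
      (∑ e ∈ hcut edge P, (![1, 2] : Fin 2 → ℝ) e) = 3 := by
    intro P hP
    rw [hcutU P hP, Fin.sum_univ_two]
    norm_num
  -- strength
  have hbotcard : (⊥ : Finpartition (Finset.univ : Finset (Fin 3))).parts.card = 3 := by
    rw [Finpartition.card_bot]; simp
  have hmemS : (3 / 2 : ℝ) ∈ { r : ℝ | ∃ P : Finpartition (Finset.univ : Finset (Fin 3)),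
      2 ≤ P.parts.card ∧
      r = (∑ e ∈ hcut edge P, (![1, 2] : Fin 2 → ℝ) e) / ((P.parts.card : ℝ) - 1) } := by
    refine ⟨⊥, by omega, ?_⟩
    rw [hsum _ (by omega), hbotcard]
    norm_num
  have hlbS : ∀ r ∈ { r : ℝ | ∃ P : Finpartition (Finset.univ : Finset (Fin 3)),
      2 ≤ P.parts.card ∧
      r = (∑ e ∈ hcut edge P, (![1, 2] : Fin 2 → ℝ) e) / ((P.parts.card : ℝ) - 1) },
      (3 / 2 : ℝ) ≤ r := by
    rintro r ⟨P, hP, rfl⟩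
    rw [hsum P hP]
    have h3 : P.parts.card ≤ 3 := le_trans P.card_parts_le_card (by simp)
    have : P.parts.card = 2 ∨ P.parts.card = 3 := by omega
    rcases this with h | h <;> rw [h] <;> norm_num
  have hS : strengthW ![1, 2] edge = 3 / 2 :=
    le_antisymm (csInf_le ⟨3 / 2, hlbS⟩ hmemS) (le_csInf ⟨_, hmemS⟩ hlbS)
  -- hypertree
  have htree : IsHypertree edge (Finset.univ : Finset (Fin 2)) := by
    constructor
    · simp
    · intro X hX
      by_cases hXu : X = Finset.univ
      · subst hXu
        simp [hedge]
      · have hfe : (Finset.univ.filter fun e : Fin 2 => edge e ⊆ X) = ∅ := by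
          apply Finset.filter_eq_empty_iff.mpr
          intro e _
          rw [hedge e]
          exact fun h => hXu (Finset.univ_subset_iff.mp h)
        rw [hfe]
        simp
  have hone : (fun _ : Fin 2 => (1 : ℝ)) ∈ GammaSet edge :=
    ⟨Finset.univ, htree, by simp⟩
  have hmem1 : (1 : ℝ) ∈ { t : ℝ | ∃ ρ ∈ AdmSet (GammaSet edge),
      t = ∑ e, (![1, 2] : Fin 2 → ℝ) e * ρ e } := by
    refine ⟨![1, 0], ⟨?_, ?_⟩, ?_⟩
    · intro e; fin_cases e <;> norm_num
    · rintro x ⟨F, hF, rfl⟩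
      have hFu : F = Finset.univ := Finset.eq_univ_of_card F (by simpa using hF.1)
      subst hFu
      simp [Fin.sum_univ_two]
    · simp [Fin.sum_univ_two]
  have hlb1 : ∀ t ∈ { t : ℝ | ∃ ρ ∈ AdmSet (GammaSet edge),
      t = ∑ e, (![1, 2] : Fin 2 → ℝ) e * ρ e }, (1 : ℝ) ≤ t := by
    rintro t ⟨ρ, ⟨hρ0, hρ1⟩, rfl⟩
    have h1 := hρ1 _ hone
    have h0 := hρ0 0
    have h2 := hρ0 1
    simp [Fin.sum_univ_two] at h1 ⊢
    linarith
  have hM : Mod1 ![1, 2] (GammaSet edge) = 1 :=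
    le_antisymm (csInf_le ⟨1, hlb1⟩ hmem1) (le_csInf ⟨_, hmem1⟩ hlb1)
  refine ⟨hPC, hS, hM, ?_⟩
  rw [hM, hS]
  norm_num
end

section
/- Let H be a partition-connected hypergraph and M(H) its hypergraphic matroid. Then the (unweighted) matroid strength of M(H) equals the partition strength of H: s(M(H)) = S(H), where s(M) = min{ |X|/(r(E) - r(E∖X)) : X ⊆ E, r(E) > r(E∖X) }. -/
/-!
Partition-connectedness forces `r(E) = |V| - 1`. Deleting the cut `δ(P)` of a partition with
`|P| ≥ 2` leaves rank at most `|V| - |P|`, so `X = δ(P)` has matroid ratio at most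
`|δ(P)| / (|P| - 1)`. Conversely, let `P` attain `r(E ∖ X)`, with `c` edges of `δ(P)` outside `X`
and `x` inside. Then `r(E) - r(E ∖ X) = |P| - 1 - c =: m`, partition-connectedness gives `m ≤ x`,
and `(c + x) / (c + m) ≤ x / m ≤ |X| / m` bounds the partition ratio of `P` by the matroid ratio
of `X`.
-/

open Finset
open scoped Classical

lemma add_div_add_le_div_of_le {c x m : ℝ} (hc : 0 ≤ c) (hm : 0 < m) (hmx : m ≤ x) :
    (c + x) / (c + m) ≤ x / m := by
  rw [div_le_div_iff₀ (by positivity) hm]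
  nlinarith

section HypergraphicRank

variable {V E : Type*} [Fintype V] [DecidableEq V] [Fintype E] [DecidableEq E]
  (edge : E → Finset V)

omit [Fintype E] [DecidableEq E] in
lemma card_parts_le_card_vertices (P : Finpartition (univ : Finset V)) :
    #P.parts ≤ Fintype.card V := by
  simpa using P.card_parts_le_card

lemma hrank_le (F : Finset E) (P : Finpartition (univ : Finset V)) :
    hrank edge F ≤ Fintype.card V - #P.parts + #(hcut edge P ∩ F) :=
  Nat.sInf_le ⟨P, rfl⟩

lemma exists_hrank_eq (F : Finset E) : ∃ P : Finpartition (univ : Finset V),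
    hrank edge F = Fintype.card V - #P.parts + #(hcut edge P ∩ F) := by
  have hne : {n | ∃ P : Finpartition (univ : Finset V),
      n = Fintype.card V - #P.parts + #(hcut edge P ∩ F)}.Nonempty := ⟨_, ⊥, rfl⟩
  exact Nat.sInf_mem hne

omit [DecidableEq E] in
lemma hcut_eq_empty_of_card_parts_le_one {P : Finpartition (univ : Finset V)}
    (hP : #P.parts ≤ 1) : hcut edge P = ∅ := by
  refine filter_eq_empty_iff.2 fun e _ ⟨p, hp, q, hq, hpq, _⟩ ↦ hpq ?_
  exact card_le_one.1 hP p hp q hq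

lemma hrank_univ_of_partitionConnected (hpc : PartitionConnected edge) :
    hrank edge univ = Fintype.card V - 1 := by
  refine le_antisymm ?_ (le_csInf ⟨_, ⊥, rfl⟩ ?_)
  · have htop : #(⊤ : Finpartition (univ : Finset V)).parts ≤ 1 :=
      (card_le_card (Finpartition.parts_top_subset _)).trans_eq (card_singleton _)
    have htop_pos (hV : 0 < Fintype.card V) : 0 < #(⊤ : Finpartition (univ : Finset V)).parts :=
      card_pos.2 <| Finpartition.parts_nonempty _ (card_pos.1 (by rwa [card_univ])).ne_empty
    have := hrank_le edge univ ⊤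
    rw [hcut_eq_empty_of_card_parts_le_one edge htop, empty_inter, card_empty] at this
    omega
  · rintro n ⟨P, rfl⟩
    have hPV := card_parts_le_card_vertices P
    have := hpc P
    rw [inter_univ]
    omega

lemma hrank_univ_sdiff_hcut_le (P : Finpartition (univ : Finset V)) :
    hrank edge (univ \ hcut edge P) ≤ Fintype.card V - #P.parts := by
  simpa using hrank_le edge (univ \ hcut edge P) P

end HypergraphicRank

section MatroidStrength

variable {V E : Type*} [Fintype V] [DecidableEq V] [Fintype E] [DecidableEq E]
  {edge : E → Finset V}

lemma exists_rank_drop_ratio_le_hcut_ratio (hpc : PartitionConnected edge)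
    {P : Finpartition (univ : Finset V)} (hP : 2 ≤ #P.parts) :
    ∃ X : Finset E, hrank edge (univ \ X) < hrank edge univ ∧
      (#X : ℝ) / ((hrank edge univ : ℝ) - (hrank edge (univ \ X) : ℝ)) ≤
        (#(hcut edge P) : ℝ) / ((#P.parts : ℝ) - 1) := by
  have hrU := hrank_univ_of_partitionConnected edge hpc
  have hPV := card_parts_le_card_vertices P
  have hcut_le := hrank_univ_sdiff_hcut_le edge P
  refine ⟨hcut edge P, by omega, ?_⟩
  have hdrop : (#P.parts : ℝ) - 1 ≤ (hrank edge univ : ℝ) - hrank edge (univ \ hcut edge P) := by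
    have hnat : hrank edge (univ \ hcut edge P) + #P.parts ≤ hrank edge univ + 1 := by omega
    have hreal : (hrank edge (univ \ hcut edge P) : ℝ) + #P.parts ≤ hrank edge univ + 1 := by
      exact_mod_cast hnat
    linarith
  have hP' : (2 : ℝ) ≤ #P.parts := by exact_mod_cast hP
  exact div_le_div_of_nonneg_left (by positivity) (by linarith) hdrop

lemma exists_hcut_ratio_le_rank_drop_ratio (hpc : PartitionConnected edge) {X : Finset E}
    (hX : hrank edge (univ \ X) < hrank edge univ) :
    ∃ P : Finpartition (univ : Finset V), 2 ≤ #P.parts ∧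
      (#(hcut edge P) : ℝ) / ((#P.parts : ℝ) - 1) ≤
        (#X : ℝ) / ((hrank edge univ : ℝ) - (hrank edge (univ \ X) : ℝ)) := by
  obtain ⟨P, hrP⟩ := exists_hrank_eq edge (univ \ X)
  have hrU := hrank_univ_of_partitionConnected edge hpc
  have hPV := card_parts_le_card_vertices P
  have hpcP := hpc P
  have hsplit : #(hcut edge P ∩ (univ \ X)) + #(hcut edge P ∩ X) = #(hcut edge P) := by
    rw [← compl_eq_univ_sdiff, ← sdiff_eq_inter_compl, card_sdiff_add_card_inter]
  have hX' : #(hcut edge P ∩ X) ≤ #X := card_le_card inter_subset_right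
  set c := #(hcut edge P ∩ (univ \ X))
  set x := #(hcut edge P ∩ X)
  set m := hrank edge univ - hrank edge (univ \ X)
  have hm : (hrank edge univ : ℝ) - hrank edge (univ \ X) = m := by
    rw [Nat.cast_sub hX.le]
  have hd : (#P.parts : ℝ) - 1 = c + m := by
    have : #P.parts = c + m + 1 := by omega
    rw [this]; push_cast; ring
  refine ⟨P, by omega, ?_⟩
  have hm_pos : (0 : ℝ) < m := by exact_mod_cast Nat.sub_pos_of_lt hX
  have hmx : (m : ℝ) ≤ x := by exact_mod_cast (show m ≤ x by omega)
  rw [hm, hd, ← hsplit, Nat.cast_add]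
  calc ((c : ℝ) + x) / (c + m) ≤ x / m := add_div_add_le_div_of_le (by positivity) hm_pos hmx
    _ ≤ #X / m := by gcongr

end MatroidStrength

/-- For a partition-connected hypergraph, the (unweighted) strength of the
hypergraphic matroid `M(H)` equals the partition strength of `H`: `s(M(H)) = S(H)`. -/
theorem stmt12 {V E : Type*} [Fintype V] [DecidableEq V] [Fintype E] [DecidableEq E]
    (edge : E → Finset V) (hpc : PartitionConnected edge) :
    mstrength edge = strength edge := by
  refine csInf_eq_csInf_of_forall_exists_le ?_ ?_
  · rintro _ ⟨X, hX, rfl⟩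
    obtain ⟨P, hP, hle⟩ := exists_hcut_ratio_le_rank_drop_ratio hpc hX
    exact ⟨_, ⟨P, hP, rfl⟩, hle⟩
  · rintro _ ⟨P, hP, rfl⟩
    obtain ⟨X, hX, hle⟩ := exists_rank_drop_ratio_le_hcut_ratio hpc hP
    exact ⟨_, ⟨X, hX, rfl⟩, hle⟩
end

section
/- There exists a hypergraph H that is not partition-connected with s(M(H)) ≠ S(H): for H with three vertices and a single hyperedge equal to the whole vertex set, S(H) = 1/2 while the matroid strength s(M(H)) = 1. -/
open Finset
open scoped Classical

section Aux

open Finset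

/-- The discrete partition of `Fin 3` into singletons. -/
def P3 : Finpartition (Finset.univ : Finset (Fin 3)) where
  parts := {{0},{1},{2}}
  supIndep := by decide
  sup_parts := by decide
  bot_notMem := by decide

lemma P3_card : P3.parts.card = 3 := by decide

lemma hcut_eq_univ (edge : Fin 1 → Finset (Fin 3)) (hedge : ∀ e, edge e = Finset.univ)
    (P : Finpartition (Finset.univ : Finset (Fin 3))) (hP : 2 ≤ P.parts.card) :
    hcut edge P = Finset.univ := by
  obtain ⟨p, hp, q, hq, hpq⟩ := Finset.one_lt_card.mp hP
  apply Finset.eq_univ_of_forall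
  intro e
  simp only [hcut, Finset.mem_filter, Finset.mem_univ, true_and]
  refine ⟨p, hp, q, hq, hpq, ?_, ?_⟩
  · rw [hedge, Finset.univ_inter]; exact P.nonempty_of_mem_parts hp
  · rw [hedge, Finset.univ_inter]; exact P.nonempty_of_mem_parts hq

lemma hcut_card (edge : Fin 1 → Finset (Fin 3)) (hedge : ∀ e, edge e = Finset.univ)
    (P : Finpartition (Finset.univ : Finset (Fin 3))) (hP : 2 ≤ P.parts.card) :
    (hcut edge P).card = 1 := by
  rw [hcut_eq_univ edge hedge P hP]; simp

lemma hrank_univ (edge : Fin 1 → Finset (Fin 3)) (hedge : ∀ e, edge e = Finset.univ) :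
    hrank edge (Finset.univ : Finset (Fin 1)) = 1 := by
  have hmem : (1 : ℕ) ∈ { n : ℕ | ∃ P : Finpartition (Finset.univ : Finset (Fin 3)),
      n = Fintype.card (Fin 3) - P.parts.card + (hcut edge P ∩ Finset.univ).card } := by
    refine ⟨P3, ?_⟩
    rw [Finset.inter_univ, P3_card, hcut_card edge hedge P3 (by rw [P3_card]; norm_num)]; simp
  apply le_antisymm
  · exact Nat.sInf_le hmem
  · apply le_csInf ⟨1, hmem⟩
    rintro n ⟨P, rfl⟩
    rw [Finset.inter_univ]
    by_cases h : 2 ≤ P.parts.card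
    · rw [hcut_card edge hedge P h]
      have := P.card_parts_le_card
      simp at this
      omega
    · simp only [Fintype.card_fin]
      omega

lemma hrank_empty (edge : Fin 1 → Finset (Fin 3)) :
    hrank edge (∅ : Finset (Fin 1)) = 0 := by
  apply Nat.sInf_eq_zero.mpr
  left
  exact ⟨P3, by rw [Finset.inter_empty, P3_card]; simp⟩

end Aux

/-- The hypergraph with three vertices and a single hyperedge equal to the
whole vertex set is not partition-connected, has `S(H) = 1/2` and matroid strength
`s(M(H)) = 1`, so `s(M(H)) ≠ S(H)`. -/
theorem stmt14 (edge : Fin 1 → Finset (Fin 3)) (hedge : ∀ e, edge e = Finset.univ) :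
    ¬ PartitionConnected edge ∧
    strength edge = 1 / 2 ∧
    mstrength edge = 1 ∧
    mstrength edge ≠ strength edge := by
  have hsdiff : (Finset.univ \ Finset.univ : Finset (Fin 1)) = ∅ := Finset.sdiff_self _
  have hr1 : hrank edge (Finset.univ : Finset (Fin 1)) = 1 := hrank_univ edge hedge
  have hr0 : hrank edge (∅ : Finset (Fin 1)) = 0 := hrank_empty edge
  have hms : mstrength edge = 1 := by
    have hset : { r : ℝ | ∃ X : Finset (Fin 1), hrank edge (Finset.univ \ X) < hrank edge Finset.univ ∧
        r = (X.card : ℝ) / ((hrank edge Finset.univ : ℝ) - (hrank edge (Finset.univ \ X) : ℝ)) } = {1} := by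
      ext r
      simp only [Set.mem_setOf_eq, Set.mem_singleton_iff]
      constructor
      · rintro ⟨X, hlt, rfl⟩
        have hX : X = ∅ ∨ X = Finset.univ := by
          rcases X.eq_empty_or_nonempty with h | h
          · exact Or.inl h
          · exact Or.inr (Finset.eq_univ_of_card _ (le_antisymm (by
              simpa using Finset.card_le_univ X) (Finset.card_pos.mpr h)))
        rcases hX with rfl | rfl
        · rw [Finset.sdiff_empty] at hlt; omega
        · rw [hsdiff, hr0, hr1]; norm_num
      · rintro rfl
        refine ⟨Finset.univ, ?_, ?_⟩
        · rw [hsdiff, hr0, hr1]; norm_num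
        · rw [hsdiff, hr0, hr1]; norm_num
    rw [mstrength, hset, csInf_singleton]
  have hS : strength edge = 1 / 2 := by
    have hmem : (1 / 2 : ℝ) ∈ { r : ℝ | ∃ P : Finpartition (Finset.univ : Finset (Fin 3)),
        2 ≤ P.parts.card ∧ r = ((hcut edge P).card : ℝ) / ((P.parts.card : ℝ) - 1) } := by
      refine ⟨P3, by rw [P3_card]; norm_num, ?_⟩
      rw [P3_card, hcut_card edge hedge P3 (by rw [P3_card]; norm_num)]
      norm_num
    have hlb : ∀ r ∈ { r : ℝ | ∃ P : Finpartition (Finset.univ : Finset (Fin 3)),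
        2 ≤ P.parts.card ∧ r = ((hcut edge P).card : ℝ) / ((P.parts.card : ℝ) - 1) },
        (1 / 2 : ℝ) ≤ r := by
      rintro r ⟨P, hP, rfl⟩
      rw [hcut_card edge hedge P hP]
      have h3 : P.parts.card ≤ 3 := by
        have := P.card_parts_le_card; simpa using this
      have h2 : (2 : ℝ) ≤ (P.parts.card : ℝ) := by exact_mod_cast hP
      have h3' : (P.parts.card : ℝ) ≤ 3 := by exact_mod_cast h3
      rw [Nat.cast_one, div_le_div_iff₀ (by norm_num) (by linarith)]
      linarith
    exact le_antisymm (csInf_le ⟨1/2, hlb⟩ hmem) (le_csInf ⟨_, hmem⟩ hlb)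
  refine ⟨?_, hS, hms, by rw [hms, hS]; norm_num⟩
  intro h
  have := h P3
  rw [P3_card, hcut_card edge hedge P3 (by rw [P3_card]; norm_num)] at this
  omega
end
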